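/- arXiv:2307.14118 — 6 statements merged into one kernel-verified Lean document; each statement's English description precedes it below -/
import Mathlib

section
/- Let κ be strongly inaccessible and let b : κ → κ be such that b(α) is an infinite cardinal for every α < κ, and let cf∘b : κ → κ be the function α ↦ cf(b(α)). Then there are Tukey connections in both directions between D_b = ⟨∏b, ∏b, ≤*⟩ and D_{cf∘b} = ⟨∏(cf∘b), ∏(cf∘b), ≤*⟩; in particular d_κ^b(≤*) = d_κ^{cf∘b}(≤*) and b_κ^b(≤*) = b_κ^{cf∘b}(≤*). -/
open Cardinal Set

namespace BGBS

/-- `P` holds for almost all `α < κ`, i.e. for all `α` above some `β < κ`. -/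
def AlmostAll (κ : Ordinal.{0}) (P : Ordinal.{0} → Prop) : Prop :=
  ∃ β < κ, ∀ α, β < α → α < κ → P α

/-- `P` holds for cofinally many `α < κ`. -/
def Cofinally (κ : Ordinal.{0}) (P : Ordinal.{0} → Prop) : Prop :=
  ∀ β < κ, ∃ α, β < α ∧ α < κ ∧ P α

/-- The set `{α < κ | P α}` is bounded in `κ`. -/
def BoundedIn (κ : Ordinal.{0}) (P : Ordinal.{0} → Prop) : Prop :=
  ∃ β < κ, ∀ α, α < κ → P α → α < β

/-- An ordinal which is (the initial ordinal of) an infinite cardinal. -/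
def IsInfCard (o : Ordinal.{0}) : Prop := o.card.ord = o ∧ ℵ₀ ≤ o.card

/-- An ordinal which is (the initial ordinal of) a cardinal. -/
def IsCardOrd (o : Ordinal.{0}) : Prop := o.card.ord = o

/-- The bounded product space `∏ b`: functions on `κ` with `f α < b α`
(and value `0` outside of `κ`, for definiteness). -/
def prodSet (κ : Ordinal.{0}) (b : Ordinal.{0} → Ordinal.{0}) :
    Set (Ordinal.{0} → Ordinal.{0}) :=
  {f | ∀ α, (α < κ → f α < b α) ∧ (¬ α < κ → f α = 0)}

/-- `f ≤* g` : `f α ≤ g α` for almost all `α < κ`. -/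
def leStar (κ : Ordinal.{0}) (f g : Ordinal.{0} → Ordinal.{0}) : Prop :=
  AlmostAll κ fun α => f α ≤ g α

/-- `f α ≠ g α` for almost all `α < κ` (eventual difference). -/
def neStar (κ : Ordinal.{0}) (f g : Ordinal.{0} → Ordinal.{0}) : Prop :=
  AlmostAll κ fun α => f α ≠ g α

/-- `f =^∞ g` : `f α = g α` for cofinally many `α < κ`. -/
def eqInfty (κ : Ordinal.{0}) (f g : Ordinal.{0} → Ordinal.{0}) : Prop :=
  Cofinally κ fun α => f α = g α

/-- The set of `(b,h)`-slaloms: `φ α ⊆ b α` and `|φ α| < h α` for `α < κ`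
(and `φ α = ∅` outside of `κ`, for definiteness). -/
def slalomSet (κ : Ordinal.{0}) (b h : Ordinal.{0} → Ordinal.{0}) :
    Set (Ordinal.{0} → Set Ordinal.{0}) :=
  {φ | ∀ α, (α < κ → φ α ⊆ Iio (b α) ∧ #(φ α) < Cardinal.lift.{1} (h α).card)
      ∧ (¬ α < κ → φ α = ∅)}

/-- `f ∈* φ` : `f α ∈ φ α` for almost all `α < κ`. -/
def inStar (κ : Ordinal.{0}) (f : Ordinal.{0} → Ordinal.{0})
    (φ : Ordinal.{0} → Set Ordinal.{0}) : Prop :=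
  AlmostAll κ fun α => f α ∈ φ α

/-- `f ∈^∞ φ` : `f α ∈ φ α` for cofinally many `α < κ`. -/
def inInfty (κ : Ordinal.{0}) (f : Ordinal.{0} → Ordinal.{0})
    (φ : Ordinal.{0} → Set Ordinal.{0}) : Prop :=
  Cofinally κ fun α => f α ∈ φ α

/-- `f α ∉ φ α` for almost all `α < κ` (the antilocalisation relation). -/
def notInStar (κ : Ordinal.{0}) (φ : Ordinal.{0} → Set Ordinal.{0})
    (f : Ordinal.{0} → Ordinal.{0}) : Prop :=
  AlmostAll κ fun α => f α ∉ φ α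

/-- The norm of the relational system `⟨Xs, Ys, R⟩`: the least cardinality of a
set `W ⊆ Ys` such that every `x ∈ Xs` is `R`-related to some member of `W`. -/
noncomputable def normOf {X : Type*} {Y : Type*} (Xs : Set X) (Ys : Set Y)
    (R : X → Y → Prop) : Cardinal :=
  sInf { c | ∃ W, W ⊆ Ys ∧ (∀ x ∈ Xs, ∃ y ∈ W, R x y) ∧ c = #W }

/-- A Tukey connection between set-based relational systems. -/
def Tukey {X Y X' Y' : Type*} (Xs : Set X) (Ys : Set Y) (R : X → Y → Prop)
    (Xs' : Set X') (Ys' : Set Y') (R' : X' → Y' → Prop) : Prop :=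
  ∃ (ρm : X → X') (ρp : Y' → Y),
    (∀ x ∈ Xs, ρm x ∈ Xs') ∧ (∀ y' ∈ Ys', ρp y' ∈ Ys) ∧
    ∀ x ∈ Xs, ∀ y' ∈ Ys', R' (ρm x) y' → R x (ρp y')

/-- The dominating number `d_κ^b(≤*)`. -/
noncomputable def dLeq (κ : Ordinal.{0}) (b : Ordinal.{0} → Ordinal.{0}) : Cardinal.{1} :=
  normOf (prodSet κ b) (prodSet κ b) (leStar κ)

/-- The unbounding number `b_κ^b(≤*)`. -/
noncomputable def bLeq (κ : Ordinal.{0}) (b : Ordinal.{0} → Ordinal.{0}) : Cardinal.{1} :=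
  normOf (prodSet κ b) (prodSet κ b) fun g f => ¬ leStar κ f g

/-- The eventual difference number `d_κ^b(≠^∞)`. -/
noncomputable def dNeq (κ : Ordinal.{0}) (b : Ordinal.{0} → Ordinal.{0}) : Cardinal.{1} :=
  normOf (prodSet κ b) (prodSet κ b) (neStar κ)

/-- The cofinal equality number `b_κ^b(≠^∞)`. -/
noncomputable def bNeq (κ : Ordinal.{0}) (b : Ordinal.{0} → Ordinal.{0}) : Cardinal.{1} :=
  normOf (prodSet κ b) (prodSet κ b) fun g f => eqInfty κ g f

/-- The localisation number `d_κ^{b,h}(∈*)`. -/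
noncomputable def dLoc (κ : Ordinal.{0}) (b h : Ordinal.{0} → Ordinal.{0}) : Cardinal.{1} :=
  normOf (prodSet κ b) (slalomSet κ b h) (inStar κ)

/-- The avoidance number `b_κ^{b,h}(∈*)`. -/
noncomputable def bLoc (κ : Ordinal.{0}) (b h : Ordinal.{0} → Ordinal.{0}) : Cardinal.{1} :=
  normOf (slalomSet κ b h) (prodSet κ b) fun φ f => ¬ inStar κ f φ

/-- The anti-avoidance number `d_κ^{b,h}(∌^∞)`. -/
noncomputable def dAntiLoc (κ : Ordinal.{0}) (b h : Ordinal.{0} → Ordinal.{0}) : Cardinal.{1} :=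
  normOf (slalomSet κ b h) (prodSet κ b) (notInStar κ)

/-- The antilocalisation number `b_κ^{b,h}(∌^∞)`. -/
noncomputable def bAntiLoc (κ : Ordinal.{0}) (b h : Ordinal.{0} → Ordinal.{0}) : Cardinal.{1} :=
  normOf (prodSet κ b) (slalomSet κ b h) (inInfty κ)

/-- `b` is increasing (below `κ`). -/
def IncreasingOn (κ : Ordinal.{0}) (b : Ordinal.{0} → Ordinal.{0}) : Prop :=
  ∀ α β, α ≤ β → β < κ → b α ≤ b β

/-- `f` is continuous at every limit ordinal of `A` (below `κ`). -/
def ContinuousOn (κ : Ordinal.{0}) (f : Ordinal.{0} → Ordinal.{0}) (A : Set Ordinal.{0}) : Prop :=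
  ∀ γ ∈ A, γ < κ → Order.IsSuccLimit γ → f γ = sSup (f '' Iio γ)

/-- `f` is discontinuous at every limit ordinal of `A` (below `κ`). -/
def DiscontinuousOn (κ : Ordinal.{0}) (f : Ordinal.{0} → Ordinal.{0}) (A : Set Ordinal.{0}) : Prop :=
  ∀ γ ∈ A, γ < κ → Order.IsSuccLimit γ → sSup (f '' Iio γ) < f γ

/-- `C` is club in `κ`: unbounded, and containing the supremum of each of its
bounded nonempty subsets without a maximum. -/
def IsClubIn (C : Set Ordinal.{0}) (κ : Ordinal.{0}) : Prop :=
  C ⊆ Iio κ ∧ (∀ β < κ, ∃ α ∈ C, β < α) ∧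
    ∀ S, S ⊆ C → S.Nonempty → (∃ β < κ, ∀ x ∈ S, x ≤ β) → sSup S ∉ S → sSup S ∈ C

/-- `S` is stationary in `κ`: it meets every club subset of `κ`. -/
def IsStationaryIn (S : Set Ordinal.{0}) (κ : Ordinal.{0}) : Prop :=
  S ⊆ Iio κ ∧ ∀ C, IsClubIn C κ → (S ∩ C).Nonempty

/-- An almost disjoint family in `∏ b`. -/
def AlmostDisjointFamily (κ : Ordinal.{0}) (b : Ordinal.{0} → Ordinal.{0})
    (A : Set (Ordinal.{0} → Ordinal.{0})) : Prop :=
  A ⊆ prodSet κ b ∧ ∀ f ∈ A, ∀ g ∈ A, f ≠ g → AlmostAll κ fun α => f α ≠ g α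

universe u

lemma tukey_dual {X Y X' Y' : Type*} {Xs : Set X} {Ys : Set Y}
    {R : X → Y → Prop} {Xs' : Set X'} {Ys' : Set Y'} {R' : X' → Y' → Prop}
    (T : Tukey Xs Ys R Xs' Ys' R') :
    Tukey Ys' Xs' (fun y' x' => ¬ R' x' y') Ys Xs (fun y x => ¬ R x y) := by
  obtain ⟨ρm, ρp, hm, hp, hT⟩ := T
  exact ⟨ρp, ρm, hp, hm, fun y' hy' x hx h hR' => h (hT x hx y' hy' hR')⟩

lemma normOf_le_of_tukey {X Y X' Y' : Type u} {Xs : Set X} {Ys : Set Y}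
    {R : X → Y → Prop} {Xs' : Set X'} {Ys' : Set Y'} {R' : X' → Y' → Prop}
    (T : Tukey Xs Ys R Xs' Ys' R')
    (hne : ∃ W, W ⊆ Ys' ∧ (∀ x ∈ Xs', ∃ y ∈ W, R' x y)) :
    normOf Xs Ys R ≤ normOf Xs' Ys' R' := by
  obtain ⟨ρm, ρp, hm, hp, hT⟩ := T
  have hS' : { c | ∃ W, W ⊆ Ys' ∧ (∀ x ∈ Xs', ∃ y ∈ W, R' x y) ∧ c = #W }.Nonempty := by
    obtain ⟨W, h1, h2⟩ := hne; exact ⟨#W, W, h1, h2, rfl⟩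
  obtain ⟨W', hW'sub, hW'dom, hc⟩ := csInf_mem hS'
  have hmem : #(ρp '' W') ∈ {c | ∃ W, W ⊆ Ys ∧ (∀ x ∈ Xs, ∃ y ∈ W, R x y) ∧ c = #W} := by
    refine ⟨ρp '' W', ?_, ?_, rfl⟩
    · rintro _ ⟨y', hy', rfl⟩; exact hp y' (hW'sub hy')
    · intro x hx
      obtain ⟨y', hy', hr⟩ := hW'dom (ρm x) (hm x hx)
      exact ⟨ρp y', ⟨y', hy', rfl⟩, hT x hx y' (hW'sub hy') hr⟩
  calc normOf Xs Ys R ≤ #(ρp '' W') := csInf_le (OrderBot.bddBelow _) hmem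
    _ ≤ #W' := Cardinal.mk_image_le
    _ = normOf Xs' Ys' R' := hc.symm

theorem stmt2 (κ : Cardinal.{0}) (hκ : κ.IsInaccessible)
    (b : Ordinal.{0} → Ordinal.{0})
    (hb : ∀ α < κ.ord, b α < κ.ord ∧ IsInfCard (b α)) :
    Tukey (prodSet κ.ord b) (prodSet κ.ord b) (leStar κ.ord)
      (prodSet κ.ord (fun α => (b α).cof.ord)) (prodSet κ.ord (fun α => (b α).cof.ord))
      (leStar κ.ord) ∧
    Tukey (prodSet κ.ord (fun α => (b α).cof.ord)) (prodSet κ.ord (fun α => (b α).cof.ord))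
      (leStar κ.ord) (prodSet κ.ord b) (prodSet κ.ord b) (leStar κ.ord) ∧
    dLeq κ.ord b = dLeq κ.ord (fun α => (b α).cof.ord) ∧
    bLeq κ.ord b = bLeq κ.ord (fun α => (b α).cof.ord) := by
  have hκ0 : ℵ₀ ≤ κ := hκ.1.le
  have hκlim : Order.IsSuccLimit κ.ord := Cardinal.isSuccLimit_ord hκ0
  set c : Ordinal → Ordinal := fun α => (b α).cof.ord with hcdef
  have hblim : ∀ α, α < κ.ord → Order.IsSuccLimit (b α) := by
    intro α hα
    obtain ⟨h1, h2⟩ := (hb α hα).2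
    rw [← h1]; exact Cardinal.isSuccLimit_ord h2
  have hclim : ∀ α, α < κ.ord → Order.IsSuccLimit (c α) := fun α hα =>
    Cardinal.isSuccLimit_ord (Ordinal.aleph0_le_cof.2 (hblim α hα))
  -- fundamental sequences
  have hfs : ∀ α, ∃ e : Ordinal → Ordinal,
      α < κ.ord → ((∀ ξ, ξ < c α → e ξ < b α) ∧
        (∀ ξ η, ξ < c α → η < c α → ξ < η → e ξ < e η) ∧
        (∀ x, x < b α → ∃ ξ, ξ < c α ∧ x ≤ e ξ)) := by
    intro α
    obtain ⟨f, hf⟩ := Ordinal.exists_fundamental_sequence (b α)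
    refine ⟨fun ξ => if h : ξ < c α then f ξ h else 0, fun _ => ⟨?_, ?_, ?_⟩⟩
    · intro ξ hξ
      simp only [dif_pos hξ]
      conv_rhs => rw [← hf.blsub_eq]
      exact Ordinal.lt_blsub _ _ _
    · intro ξ η hξ hη hlt
      simp only [dif_pos hξ, dif_pos hη]
      exact hf.2.1 _ _ hlt
    · intro x hx
      rw [← hf.blsub_eq] at hx
      obtain ⟨i, hi, hle⟩ := Ordinal.lt_blsub_iff.1 hx
      exact ⟨i, hi, by show x ≤ (if h : i < c α then f i h else 0); rw [dif_pos hi]; exact hle⟩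
  choose e he using hfs
  have emono : ∀ α, α < κ.ord → ∀ ξ η, ξ ≤ η → η < c α → e α ξ ≤ e α η := by
    intro α hα ξ η hle hη
    rcases eq_or_lt_of_le hle with h | h
    · rw [h]
    · exact ((he α hα).2.1 ξ η (h.trans hη) hη h).le
  -- Tukey 1 : D_b ⪯ D_c
  have T1 : Tukey (prodSet κ.ord b) (prodSet κ.ord b) (leStar κ.ord)
      (prodSet κ.ord c) (prodSet κ.ord c) (leStar κ.ord) := by
    refine ⟨fun f α => if α < κ.ord then sInf {ξ | ξ < c α ∧ f α ≤ e α ξ} else 0,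
      fun g α => if α < κ.ord then e α (g α) else 0, ?_, ?_, ?_⟩
    · intro f hf α
      constructor
      · intro hα
        simp only [if_pos hα]
        have hne : {ξ | ξ < c α ∧ f α ≤ e α ξ}.Nonempty := by
          obtain ⟨ξ, h1, h2⟩ := (he α hα).2.2 (f α) ((hf α).1 hα)
          exact ⟨ξ, h1, h2⟩
        exact (csInf_mem hne).1
      · intro hα; simp only [if_neg hα]
    · intro g hg α
      constructor
      · intro hα
        simp only [if_pos hα]
        exact (he α hα).1 _ ((hg α).1 hα)
      · intro hα; simp only [if_neg hα]
    · rintro f hf g hg ⟨β, hβ, h⟩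
      refine ⟨β, hβ, fun α hβα hα => ?_⟩
      have hne : {ξ | ξ < c α ∧ f α ≤ e α ξ}.Nonempty := by
        obtain ⟨ξ, h1, h2⟩ := (he α hα).2.2 (f α) ((hf α).1 hα)
        exact ⟨ξ, h1, h2⟩
      have hmem := csInf_mem hne
      have hle := h α hβα hα
      simp only [if_pos hα] at hle ⊢
      exact hmem.2.trans (emono α hα _ _ hle ((hg α).1 hα))
  -- Tukey 2 : D_c ⪯ D_b
  have T2 : Tukey (prodSet κ.ord c) (prodSet κ.ord c) (leStar κ.ord)
      (prodSet κ.ord b) (prodSet κ.ord b) (leStar κ.ord) := by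
    have key : ∀ α, α < κ.ord → ∀ x, x < b α → {ξ | ξ < c α ∧ x < e α ξ}.Nonempty := by
      intro α hα x hx
      obtain ⟨ξ, h1, h2⟩ := (he α hα).2.2 x hx
      have hs : Order.succ ξ < c α := (hclim α hα).succ_lt h1
      exact ⟨Order.succ ξ, hs, h2.trans_lt ((he α hα).2.1 ξ (Order.succ ξ) h1 hs (Order.lt_succ ξ))⟩
    refine ⟨fun f α => if α < κ.ord then e α (f α) else 0,
      fun g α => if α < κ.ord then sInf {ξ | ξ < c α ∧ g α < e α ξ} else 0, ?_, ?_, ?_⟩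
    · intro f hf α
      constructor
      · intro hα
        simp only [if_pos hα]
        exact (he α hα).1 _ ((hf α).1 hα)
      · intro hα; simp only [if_neg hα]
    · intro g hg α
      constructor
      · intro hα
        simp only [if_pos hα]
        exact (csInf_mem (key α hα _ ((hg α).1 hα))).1
      · intro hα; simp only [if_neg hα]
    · rintro f hf g hg ⟨β, hβ, h⟩
      refine ⟨β, hβ, fun α hβα hα => ?_⟩
      have hmem := csInf_mem (key α hα _ ((hg α).1 hα))
      have hle := h α hβα hα
      simp only [if_pos hα] at hle ⊢
      by_contra hcon
      push_neg at hcon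
      exact absurd ((emono α hα _ _ hcon.le ((hf α).1 hα)).trans hle) (not_le.2 hmem.2)
  -- nonemptiness witnesses
  have hdom : ∀ b' : Ordinal → Ordinal, ∃ W, W ⊆ prodSet κ.ord b' ∧
      ∀ x ∈ prodSet κ.ord b', ∃ y ∈ W, leStar κ.ord x y :=
    fun b' => ⟨prodSet κ.ord b', subset_rfl,
      fun x hx => ⟨x, hx, ⟨0, hκlim.pos, fun α _ _ => le_rfl⟩⟩⟩
  have hbdd : ∀ b' : Ordinal → Ordinal, (∀ α, α < κ.ord → Order.IsSuccLimit (b' α)) →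
      ∃ W, W ⊆ prodSet κ.ord b' ∧
      ∀ g ∈ prodSet κ.ord b', ∃ f ∈ W, ¬ leStar κ.ord f g := by
    intro b' hlim'
    refine ⟨prodSet κ.ord b', subset_rfl, fun g hg => ?_⟩
    refine ⟨fun α => if α < κ.ord then Order.succ (g α) else 0, fun α => ?_, ?_⟩
    · constructor
      · intro hα; simp only [if_pos hα]; exact (hlim' α hα).succ_lt ((hg α).1 hα)
      · intro hα; simp only [if_neg hα]
    · rintro ⟨β, hβ, h⟩
      have hs : Order.succ β < κ.ord := hκlim.succ_lt hβ
      have := h (Order.succ β) (Order.lt_succ β) hs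
      simp only [if_pos hs] at this
      exact absurd this (Order.lt_succ _).not_ge
  refine ⟨T1, T2, ?_, ?_⟩
  · exact le_antisymm (normOf_le_of_tukey T1 (hdom c))
      (normOf_le_of_tukey T2 (hdom b))
  · exact le_antisymm
      (normOf_le_of_tukey (tukey_dual T2) (hbdd c hclim))
      (normOf_le_of_tukey (tukey_dual T1) (hbdd b hblim))

end BGBS
end

section
/- Let κ be strongly inaccessible and let b : κ → κ be increasing with b(α) an infinite cardinal for every α < κ. For each regular cardinal λ < κ put D_λ = {α < κ : cf(b(α)) = λ}. Then: (i) if there is a least regular cardinal λ < κ such that D_λ is cofinal in κ, then b_κ^b(≤*) = λ; (ii) if D_λ is bounded in κ for every regular λ < κ and there is a stationary set S ⊆ κ such that for every ξ ∈ S there exists α_ξ ≥ ξ with cf(b(α_ξ)) ≤ ξ, then b_κ^b(≤*) = κ; (iii) if D_λ is bounded in κ for every regular λ < κ and there is a club set C ⊆ κ such that for every ξ ∈ C and every α ≥ ξ we have cf(b(α)) > ξ, then b_κ^b(≤*) ≥ κ⁺. -/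
open Cardinal Set

namespace BGBS

section Helpers


lemma sSup_lt_ord' {o : Ordinal.{0}} {A : Set Ordinal.{0}} (ho : 0 < o)
    (h1 : ∀ a ∈ A, a < o) (h2 : #A < Cardinal.lift.{1} o.cof) : sSup A < o := by
  rcases A.eq_empty_or_nonempty with rfl | hA
  · simpa using ho
  · obtain ⟨μ, hμ⟩ := Cardinal.mem_range_lift_of_le h2.le
    have hμ' : μ < o.cof := by
      rw [← Cardinal.lift_lt.{0,1}, hμ]; exact h2
    have hmk : #(ULift.{1} (Quotient.out μ)) = #A := by
      rw [Cardinal.mk_uLift, Cardinal.mk_out, hμ]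
    obtain ⟨e⟩ := Cardinal.eq.mp hmk
    have hrange : Set.range (fun x : Quotient.out μ => (e ⟨x⟩ : Ordinal)) = A := by
      ext y; constructor
      · rintro ⟨x, rfl⟩; exact (e ⟨x⟩).2
      · intro hy
        refine ⟨(e.symm ⟨y, hy⟩).down, ?_⟩
        have : e ⟨(e.symm ⟨y, hy⟩).down⟩ = ⟨y, hy⟩ := by
          convert e.apply_symm_apply ⟨y, hy⟩
        simp only [this]
    have : sSup A = iSup (fun x : Quotient.out μ => (e ⟨x⟩ : Ordinal)) := by
      rw [iSup, hrange]
    rw [this]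
    apply Ordinal.iSup_lt_ord
    · rwa [Cardinal.mk_out]
    · intro x; exact h1 _ (e ⟨x⟩).2

lemma exists_cofinal_fun {o : Ordinal.{0}} (ho : Order.IsSuccLimit o) :
    ∃ c : Ordinal.{0} → Ordinal.{0},
      (∀ i < o.cof.ord, c i < o) ∧ ∀ x < o, ∃ i < o.cof.ord, x < c i := by
  obtain ⟨ι, f, hf, hι⟩ := Ordinal.exists_lsub_cof o
  have h1 : #(Iio o.cof.ord) = #(ULift.{1} ι) := by
    rw [Ordinal.mk_Iio_ordinal, Cardinal.card_ord, Cardinal.mk_uLift, hι]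
  obtain ⟨e⟩ := Cardinal.eq.mp h1
  refine ⟨fun i => if h : i < o.cof.ord then f (e ⟨i, h⟩).down else 0, ?_, ?_⟩
  · intro i hi
    dsimp only
    rw [dif_pos hi]
    exact lt_of_lt_of_le (Ordinal.lt_lsub f _) hf.le
  · intro x hx
    have hx1 : Order.succ x < o := ho.succ_lt hx
    rw [← hf, Ordinal.lt_lsub_iff] at hx1
    obtain ⟨i, hi⟩ := hx1
    obtain ⟨⟨jv, jp⟩, hj⟩ : ∃ j : Iio o.cof.ord, e j = ⟨i⟩ := ⟨e.symm ⟨i⟩, e.apply_symm_apply _⟩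
    refine ⟨jv, jp, ?_⟩
    dsimp only
    rw [dif_pos (mem_Iio.mp jp), hj]
    exact (Order.lt_succ x).trans_le hi


section
variable {κ : Cardinal.{0}} {b : Ordinal.{0} → Ordinal.{0}}

lemma blim (hb : ∀ α < κ.ord, b α < κ.ord ∧ IsInfCard (b α)) {α : Ordinal.{0}}
    (hα : α < κ.ord) : Order.IsSuccLimit (b α) := by
  obtain ⟨-, hcard, hinf⟩ := hb α hα
  rw [← hcard]
  exact Cardinal.isSuccLimit_ord hinf

lemma dominated (hb : ∀ α < κ.ord, b α < κ.ord ∧ IsInfCard (b α))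
    {B : Set (Ordinal.{0} → Ordinal.{0})} (hB : B ⊆ prodSet κ.ord b)
    {β : Ordinal.{0}} (hβ : β < κ.ord)
    (hsm : ∀ α, β < α → α < κ.ord → #B < Cardinal.lift.{1} (b α).cof) :
    ∃ g ∈ prodSet κ.ord b, ∀ f ∈ B, leStar κ.ord f g := by
  classical
  refine ⟨fun α => if h : β < α ∧ α < κ.ord then
      sSup ((fun f : Ordinal.{0} → Ordinal.{0} => f α) '' B) else 0, ?_, ?_⟩
  · intro α
    constructor
    · intro hα
      dsimp only
      by_cases h : β < α ∧ α < κ.ord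
      · rw [dif_pos h]
        refine sSup_lt_ord' (blim hb hα).pos ?_ ?_
        · rintro x ⟨f, hf, rfl⟩
          exact ((hB hf) α).1 hα
        · exact lt_of_le_of_lt Cardinal.mk_image_le (hsm α h.1 h.2)
      · rw [dif_neg h]; exact (blim hb hα).pos
    · intro hα
      dsimp only
      rw [dif_neg (fun h : β < α ∧ α < κ.ord => hα h.2)]
  · intro f hf
    refine ⟨β, hβ, fun α h1 h2 => ?_⟩
    simp only [dif_pos (⟨h1, h2⟩ : β < α ∧ α < κ.ord)]
    refine le_csSup ⟨b α, ?_⟩ ⟨f, hf, rfl⟩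
    rintro x ⟨f', hf', rfl⟩
    exact (((hB hf') α).1 h2).le

lemma tail_cof (hκ : κ.IsInaccessible) (hb : ∀ α < κ.ord, b α < κ.ord ∧ IsInfCard (b α))
    {μ : Cardinal.{0}} (hμ : μ < κ)
    (hD : ∀ lam : Cardinal.{0}, lam.IsRegular → lam ≤ μ →
      BoundedIn κ.ord fun α => (b α).cof = lam) :
    ∃ β < κ.ord, ∀ α, β < α → α < κ.ord → μ < (b α).cof := by
  classical
  set X : Set Cardinal.{0} := {lam | lam.IsRegular ∧ lam ≤ μ} with hX
  have hBf : ∀ lam ∈ X, ∃ β, β < κ.ord ∧ ∀ α, α < κ.ord → (b α).cof = lam → α < β := by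
    intro lam hlam
    obtain ⟨β, hβ, h⟩ := hD lam hlam.1 hlam.2
    exact ⟨β, hβ, h⟩
  set Bf : Cardinal.{0} → Ordinal.{0} := fun lam =>
    if h : lam ∈ X then (hBf lam h).choose else 0 with hBfdef
  have hBf1 : ∀ lam ∈ X, Bf lam < κ.ord ∧ ∀ α, α < κ.ord → (b α).cof = lam → α < Bf lam := by
    intro lam hlam
    simp only [hBfdef, dif_pos hlam]
    exact (hBf lam hlam).choose_spec
  have hκord : Order.IsSuccLimit κ.ord := Cardinal.isSuccLimit_ord hκ.1.le
  have hbdd : BddAbove (Bf '' X) := by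
    refine ⟨κ.ord, ?_⟩
    rintro x ⟨lam, hlam, rfl⟩
    exact ((hBf1 lam hlam).1).le
  have hσ : sSup (Bf '' X) < κ.ord := by
    refine sSup_lt_ord' hκord.pos ?_ ?_
    · rintro x ⟨lam, hlam, rfl⟩
      exact (hBf1 lam hlam).1
    · refine lt_of_le_of_lt Cardinal.mk_image_le ?_
      have hXle : #X ≤ #(Iio (Order.succ μ.ord)) := by
        refine Cardinal.mk_le_of_injective (f := fun l : X =>
          (⟨l.1.ord, Order.lt_succ_iff.mpr (Cardinal.ord_le_ord.mpr l.2.2)⟩ : Iio (Order.succ μ.ord))) ?_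
        intro l l' h
        exact Subtype.ext (Cardinal.ord_injective (congrArg Subtype.val h))
      refine lt_of_le_of_lt hXle ?_
      rw [Ordinal.mk_Iio_ordinal, Ordinal.card_succ, Cardinal.card_ord, hκ.isRegular.cof_eq]
      refine Cardinal.lift_lt.mpr ?_
      calc μ + 1 ≤ Order.succ μ := Cardinal.add_one_le_succ μ
        _ ≤ 2 ^ μ := Order.succ_le_of_lt (Cardinal.cantor μ)
        _ < κ := hκ.isStrongLimit.two_power_lt hμ
  refine ⟨sSup (Bf '' X), hσ, fun α h1 h2 => ?_⟩
  by_contra hle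
  push_neg at hle
  have hreg : ((b α).cof).IsRegular := Cardinal.isRegular_cof (blim hb h2)
  have hmem : (b α).cof ∈ X := ⟨hreg, hle⟩
  have hα : α < Bf ((b α).cof) := (hBf1 _ hmem).2 α h2 rfl
  have : α < sSup (Bf '' X) := lt_of_lt_of_le hα (le_csSup hbdd ⟨_, hmem, rfl⟩)
  exact absurd h1 (not_lt.mpr this.le)


lemma closure_club (hκ : κ.IsInaccessible) {Φ : Ordinal.{0} → Ordinal.{0}}
    (hΦ : ∀ i < κ.ord, Φ i < κ.ord) :
    IsClubIn {γ : Ordinal.{0} | γ < κ.ord ∧ ∀ i < γ, Φ i < γ} κ.ord := by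
  have hlim : Order.IsSuccLimit κ.ord := Cardinal.isSuccLimit_ord hκ.1.le
  have hcof : κ.ord.cof = κ := hκ.isRegular.cof_eq
  have hsup : ∀ x < κ.ord, sSup (Φ '' Iio x) < κ.ord := by
    intro x hx
    refine sSup_lt_ord' hlim.pos ?_ ?_
    · rintro y ⟨i, hi, rfl⟩
      exact hΦ i (lt_trans hi hx)
    · refine lt_of_le_of_lt Cardinal.mk_image_le ?_
      rw [Ordinal.mk_Iio_ordinal, hcof]
      exact Cardinal.lift_lt.mpr (Cardinal.lt_ord.mp hx)
  refine ⟨fun γ hγ => hγ.1, ?_, ?_⟩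
  · intro δ hδ
    set step : Ordinal.{0} → Ordinal.{0} :=
      fun x => Order.succ (max (sSup (Φ '' Iio x)) x) with hstepdef
    have hstep : ∀ x < κ.ord, step x < κ.ord ∧ x < step x ∧ ∀ i < x, Φ i < step x := by
      intro x hx
      refine ⟨hlim.succ_lt (max_lt (hsup x hx) hx),
        (le_max_right _ x).trans_lt (Order.lt_succ _), fun i hi => ?_⟩
      have h1 : Φ i ≤ sSup (Φ '' Iio x) := by
        refine le_csSup ⟨κ.ord, ?_⟩ ⟨i, hi, rfl⟩
        rintro y ⟨j, hj, rfl⟩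
        exact (hΦ j (lt_trans hj hx)).le
      exact lt_of_le_of_lt (h1.trans (le_max_left _ x)) (Order.lt_succ _)
    set N : ℕ → Ordinal.{0} := fun n => step^[n] (Order.succ δ) with hNdef
    have hNκ : ∀ n, N n < κ.ord := by
      intro n
      induction n with
      | zero => exact hlim.succ_lt hδ
      | succ k ih =>
        have : N (k+1) = step (N k) := Function.iterate_succ_apply' step k _
        rw [this]
        exact (hstep _ ih).1
    have hbddN : BddAbove (Set.range N) := ⟨κ.ord, by rintro x ⟨n, rfl⟩; exact (hNκ n).le⟩
    have hγκ : sSup (Set.range N) < κ.ord := by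
      refine sSup_lt_ord' hlim.pos ?_ ?_
      · rintro x ⟨n, rfl⟩; exact hNκ n
      · have h1 : Cardinal.lift.{0,1} #(Set.range N) ≤ Cardinal.lift.{1,0} #ℕ :=
          Cardinal.mk_range_le_lift
        rw [Cardinal.lift_uzero, Cardinal.mk_nat, Cardinal.lift_aleph0] at h1
        refine lt_of_le_of_lt h1 ?_
        rw [hcof]
        have h2 : (ℵ₀ : Cardinal.{1}) = Cardinal.lift.{1,0} ℵ₀ := by simp
        rw [h2]
        exact Cardinal.lift_lt.mpr hκ.1
    refine ⟨sSup (Set.range N), ⟨hγκ, fun i hi => ?_⟩, ?_⟩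
    · have hex : ∃ n, i < N n := by
        by_contra h
        push_neg at h
        have : sSup (Set.range N) ≤ i := csSup_le ⟨N 0, ⟨0, rfl⟩⟩ (by rintro x ⟨n, rfl⟩; exact h n)
        exact absurd hi (not_lt.mpr this)
      obtain ⟨n, hn⟩ := hex
      have h2 : Φ i < N (n+1) := by
        have : N (n+1) = step (N n) := Function.iterate_succ_apply' step n _
        rw [this]
        exact (hstep _ (hNκ n)).2.2 i hn
      exact lt_of_lt_of_le h2 (le_csSup hbddN ⟨n+1, rfl⟩)
    · have : δ < N 0 := Order.lt_succ δ
      exact lt_of_lt_of_le this (le_csSup hbddN ⟨0, rfl⟩)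
  · intro T hT hne hbd hnm
    obtain ⟨β', hβ'κ, hβ'⟩ := hbd
    refine ⟨lt_of_le_of_lt (csSup_le hne hβ') hβ'κ, fun i hi => ?_⟩
    have hex : ∃ t ∈ T, i < t := by
      by_contra h
      push_neg at h
      exact absurd hi (not_lt.mpr (csSup_le hne h))
    obtain ⟨t, htT, hit⟩ := hex
    exact lt_of_lt_of_le ((hT htT).2 i hit) (le_csSup ⟨β', hβ'⟩ htT)

lemma boundedIn_of_not_cofinally {κ' : Ordinal.{0}} (hlim : Order.IsSuccLimit κ')
    {P : Ordinal.{0} → Prop} (h : ¬ Cofinally κ' P) : BoundedIn κ' P := by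
  rw [Cofinally] at h
  push_neg at h
  obtain ⟨β, hβ, h⟩ := h
  refine ⟨Order.succ β, hlim.succ_lt hβ, fun α hα hP => ?_⟩
  by_contra hc
  push_neg at hc
  exact h α (Order.succ_le_iff.mp hc) hα hP

open scoped Classical in
noncomputable def CS (b : Ordinal.{0} → Ordinal.{0}) : Ordinal.{0} → Ordinal.{0} → Ordinal.{0} :=
  fun α => if h : Order.IsSuccLimit (b α) then (exists_cofinal_fun h).choose else fun _ => 0

lemma CS_spec {α : Ordinal.{0}} (h : Order.IsSuccLimit (b α)) :
    (∀ i < (b α).cof.ord, CS b α i < b α) ∧ ∀ x < b α, ∃ i < (b α).cof.ord, x < CS b α i := by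
  unfold CS
  rw [dif_pos h]
  exact (exists_cofinal_fun h).choose_spec

noncomputable def Ffam (κ : Cardinal.{0}) (b : Ordinal.{0} → Ordinal.{0}) :
    Ordinal.{0} → Ordinal.{0} → Ordinal.{0} :=
  fun i α => if _ : α < κ.ord ∧ i < (b α).cof.ord then CS b α i else 0

lemma Ffam_mem (hb : ∀ α < κ.ord, b α < κ.ord ∧ IsInfCard (b α)) (i : Ordinal.{0}) :
    Ffam κ b i ∈ prodSet κ.ord b := by
  intro α
  constructor
  · intro hα
    by_cases h : α < κ.ord ∧ i < (b α).cof.ord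
    · rw [Ffam, dif_pos h]
      exact (CS_spec (blim hb hα)).1 i h.2
    · rw [Ffam, dif_neg h]
      exact (blim hb hα).pos
  · intro hα
    rw [Ffam, dif_neg (fun h : α < κ.ord ∧ i < (b α).cof.ord => hα h.1)]

lemma exists_unbdd {ι : Ordinal.{0}} {g : Ordinal.{0} → Ordinal.{0}}
    (hT : ∀ T : Ordinal.{0} → Ordinal.{0},
      (∀ i < ι, T i < κ.ord ∧ ∀ α, T i < α → α < κ.ord → Ffam κ b i α ≤ g α) → False) :
    ∃ f ∈ Ffam κ b '' Iio ι, ¬ leStar κ.ord f g := by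
  classical
  by_contra hcon
  push_neg at hcon
  have h1 : ∀ i < ι, ∃ β, β < κ.ord ∧ ∀ α, β < α → α < κ.ord → Ffam κ b i α ≤ g α := by
    intro i hi
    obtain ⟨β, hβ, h⟩ := hcon (Ffam κ b i) ⟨i, hi, rfl⟩
    exact ⟨β, hβ, h⟩
  refine hT (fun i => if h : i < ι then (h1 i h).choose else 0) (fun i hi => ?_)
  simp only [dif_pos hi]
  exact (h1 i hi).choose_spec


lemma exists_not_leStar (hκ : κ.IsInaccessible)
    (hb : ∀ α < κ.ord, b α < κ.ord ∧ IsInfCard (b α))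
    {g : Ordinal.{0} → Ordinal.{0}} (hg : g ∈ prodSet κ.ord b) :
    ∃ f ∈ prodSet κ.ord b, ¬ leStar κ.ord f g := by
  have hlim : Order.IsSuccLimit κ.ord := Cardinal.isSuccLimit_ord hκ.1.le
  refine ⟨fun α => if h : α < κ.ord then Order.succ (g α) else 0, ?_, ?_⟩
  · intro α
    dsimp only
    constructor
    · intro hα
      rw [dif_pos hα]
      exact (blim hb hα).succ_lt ((hg α).1 hα)
    · intro hα
      rw [dif_neg hα]
  · rintro ⟨β, hβ, h⟩
    have hs : Order.succ β < κ.ord := hlim.succ_lt hβ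
    have h2 := h (Order.succ β) (Order.lt_succ β) hs
    dsimp only at h2
    rw [dif_pos hs] at h2
    exact lt_irrefl _ (Order.succ_le_iff.mp h2)

lemma upper_i (hκ : κ.IsInaccessible) (hb : ∀ α < κ.ord, b α < κ.ord ∧ IsInfCard (b α))
    {lam : Cardinal.{0}} (hlt : lam < κ)
    (hcf : Cofinally κ.ord (fun α => (b α).cof = lam)) :
    ∀ g ∈ prodSet κ.ord b, ∃ f ∈ Ffam κ b '' Iio lam.ord, ¬ leStar κ.ord f g := by
  intro g hg
  refine exists_unbdd ?_
  intro T hT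
  have hκlim : Order.IsSuccLimit κ.ord := Cardinal.isSuccLimit_ord hκ.1.le
  have hσ : sSup (T '' Iio lam.ord) < κ.ord := by
    refine sSup_lt_ord' hκlim.pos ?_ ?_
    · rintro x ⟨i, hi, rfl⟩
      exact (hT i hi).1
    · refine lt_of_le_of_lt Cardinal.mk_image_le ?_
      rw [Ordinal.mk_Iio_ordinal, Cardinal.card_ord, hκ.isRegular.cof_eq]
      exact Cardinal.lift_lt.mpr hlt
  obtain ⟨α, hσα, hακ, hcofα⟩ := hcf _ hσ
  obtain ⟨i, hiord, hgt⟩ := (CS_spec (blim hb hακ)).2 (g α) ((hg α).1 hακ)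
  have hilam : i < lam.ord := by rw [← hcofα]; exact hiord
  have hTi : T i < α := by
    have hbdd : BddAbove (T '' Iio lam.ord) := by
      refine ⟨κ.ord, ?_⟩
      rintro x ⟨j, hj, rfl⟩
      exact (hT j hj).1.le
    exact lt_of_le_of_lt (le_csSup hbdd ⟨i, hilam, rfl⟩) hσα
  have hle := (hT i hilam).2 α hTi hακ
  rw [Ffam, dif_pos (⟨hακ, hiord⟩ : α < κ.ord ∧ i < (b α).cof.ord)] at hle
  exact absurd hle (not_le.mpr hgt)

lemma upper_ii (hκ : κ.IsInaccessible) (hb : ∀ α < κ.ord, b α < κ.ord ∧ IsInfCard (b α))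
    {S : Set Ordinal.{0}} (hS : IsStationaryIn S κ.ord)
    (hSp : ∀ ξ ∈ S, ∃ α, ξ ≤ α ∧ α < κ.ord ∧ (b α).cof.ord ≤ ξ) :
    ∀ g ∈ prodSet κ.ord b, ∃ f ∈ Ffam κ b '' Iio κ.ord, ¬ leStar κ.ord f g := by
  intro g hg
  refine exists_unbdd ?_
  intro T hT
  classical
  set Φ : Ordinal.{0} → Ordinal.{0} := fun i => if h : i < κ.ord then T i else 0 with hΦdef
  have hΦ : ∀ i < κ.ord, Φ i < κ.ord := by
    intro i hi
    simp only [hΦdef, dif_pos hi]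
    exact (hT i hi).1
  obtain ⟨ξ, hξS, hξC⟩ := hS.2 _ (closure_club hκ hΦ)
  obtain ⟨α, hξα, hακ, hcofle⟩ := hSp ξ hξS
  obtain ⟨i, hiord, hgt⟩ := (CS_spec (blim hb hακ)).2 (g α) ((hg α).1 hακ)
  have hiξ : i < ξ := lt_of_lt_of_le hiord hcofle
  have hiκ : i < κ.ord := lt_trans hiξ hξC.1
  have hTi : T i < α := by
    have h3 : Φ i < ξ := hξC.2 i hiξ
    rw [hΦdef] at h3
    simp only [dif_pos hiκ] at h3
    exact lt_of_lt_of_le h3 hξα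
  have hle := (hT i hiκ).2 α hTi hακ
  rw [Ffam, dif_pos (⟨hακ, hiord⟩ : α < κ.ord ∧ i < (b α).cof.ord)] at hle
  exact absurd hle (not_le.mpr hgt)

lemma club_dominated (hκ : κ.IsInaccessible)
    (hb : ∀ α < κ.ord, b α < κ.ord ∧ IsInfCard (b α))
    {C : Set Ordinal.{0}} (hC : IsClubIn C κ.ord)
    (hcb : ∀ ξ ∈ C, ∀ α, ξ ≤ α → α < κ.ord → ξ < (b α).cof.ord)
    {W : Set (Ordinal.{0} → Ordinal.{0})} (hW : W ⊆ prodSet κ.ord b)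
    (hWc : #W ≤ Cardinal.lift.{1} κ) :
    ∃ g ∈ prodSet κ.ord b, ∀ f ∈ W, leStar κ.ord f g := by
  classical
  rcases W.eq_empty_or_nonempty with rfl | hne
  · refine ⟨fun _ => 0, ?_, by simp⟩
    intro α
    exact ⟨fun hα => (blim hb hα).pos, fun _ => rfl⟩
  have hcard : #W ≤ #(Iio κ.ord) := by
    rw [Ordinal.mk_Iio_ordinal, Cardinal.card_ord]
    exact hWc
  obtain ⟨emb⟩ := Cardinal.le_def _ _ |>.mp hcard
  haveI : Nonempty W := hne.to_subtype
  set s : Iio κ.ord → W := Function.invFun emb with hsdef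
  have hs : Function.Surjective s := Function.invFun_surjective emb.injective
  set ζ : Ordinal.{0} → Ordinal.{0} := fun α => sSup (C ∩ Iic α) with hζdef
  have hζ : ∀ α < κ.ord, (C ∩ Iic α).Nonempty → ζ α ∈ C ∧ ζ α ≤ α := by
    intro α hα hne'
    have hle : ζ α ≤ α := csSup_le hne' (fun x hx => hx.2)
    by_cases hmem : sSup (C ∩ Iic α) ∈ C ∩ Iic α
    · exact ⟨hmem.1, hle⟩
    · refine ⟨hC.2.2 (C ∩ Iic α) inter_subset_left hne' ⟨α, hα, fun x hx => hx.2⟩ hmem, hle⟩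
  have hζcof : ∀ α < κ.ord, (ζ α).card < (b α).cof := by
    intro α hα
    rcases (C ∩ Iic α).eq_empty_or_nonempty with he | hne'
    · have : ζ α = 0 := by rw [hζdef]; simp [he]
      rw [this]
      simp only [Ordinal.card_zero]
      exact lt_of_lt_of_le Cardinal.aleph0_pos (Ordinal.aleph0_le_cof.mpr (blim hb hα))
    · obtain ⟨hζC, hζle⟩ := hζ α hα hne'
      exact Cardinal.lt_ord.mp (hcb _ hζC α hζle hα)
  set g : Ordinal.{0} → Ordinal.{0} := fun α => if h : α < κ.ord then
      sSup {x | ∃ ε : Iio κ.ord, ε.1 < ζ α ∧ x = (s ε).1 α} else 0 with hgdef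
  have hA : ∀ α, α < κ.ord → ∀ x ∈ {x | ∃ ε : Iio κ.ord, ε.1 < ζ α ∧ x = (s ε).1 α}, x < b α := by
    rintro α hα x ⟨ε, hε, rfl⟩
    exact ((hW (s ε).2) α).1 hα
  refine ⟨g, ?_, ?_⟩
  · intro α
    constructor
    · intro hα
      rw [hgdef]
      simp only [dif_pos hα]
      refine sSup_lt_ord' (blim hb hα).pos (hA α hα) ?_
      have h1 : {x | ∃ ε : Iio κ.ord, ε.1 < ζ α ∧ x = (s ε).1 α} =
          Set.range (fun ε : {ε : Iio κ.ord // ε.1 < ζ α} => (s ε.1).1 α) := by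
        ext x
        constructor
        · rintro ⟨ε, hε, rfl⟩; exact ⟨⟨ε, hε⟩, rfl⟩
        · rintro ⟨⟨ε, hε⟩, rfl⟩; exact ⟨ε, hε, rfl⟩
      rw [h1]
      refine lt_of_le_of_lt Cardinal.mk_range_le ?_
      have h2 : #{ε : Iio κ.ord // ε.1 < ζ α} ≤ #(Iio (ζ α)) := by
        refine Cardinal.mk_le_of_injective (f := fun ε : {ε : Iio κ.ord // ε.1 < ζ α} =>
          (⟨ε.1.1, ε.2⟩ : Iio (ζ α))) ?_
        intro x y h
        simp only [Subtype.mk.injEq] at h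
        exact Subtype.ext (Subtype.ext (Subtype.mk.inj h))
      refine lt_of_le_of_lt h2 ?_
      rw [Ordinal.mk_Iio_ordinal]
      exact Cardinal.lift_lt.mpr (hζcof α hα)
    · intro hα
      rw [hgdef]
      simp only [dif_neg hα]
  · intro f hfW
    obtain ⟨ε₀, hε₀⟩ := hs ⟨f, hfW⟩
    obtain ⟨γ, hγC, hγgt⟩ := hC.2.1 ε₀.1 ε₀.2
    refine ⟨γ, hC.1 hγC, fun α hγα hακ => ?_⟩
    have hγζ : γ ≤ ζ α := le_csSup ⟨α, fun x hx => hx.2⟩ ⟨hγC, hγα.le⟩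
    have hmem : f α ∈ {x | ∃ ε : Iio κ.ord, ε.1 < ζ α ∧ x = (s ε).1 α} := by
      refine ⟨ε₀, lt_of_lt_of_le hγgt hγζ, ?_⟩
      rw [hε₀]
    rw [hgdef]
    simp only [dif_pos hακ]
    exact le_csSup ⟨b α, fun x hx => (hA α hακ x hx).le⟩ hmem

end


end Helpers

/-- Triviality trichotomy for the unbounding number `b_κ^b(≤*)`,
with `D_λ = {α < κ : cf(b α) = λ}` for regular `λ < κ`. -/
theorem stmt3 (κ : Cardinal.{0}) (hκ : κ.IsInaccessible)
    (b : Ordinal.{0} → Ordinal.{0})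
    (hbinc : IncreasingOn κ.ord b)
    (hb : ∀ α < κ.ord, b α < κ.ord ∧ IsInfCard (b α)) :
    (∀ lam : Cardinal.{0}, lam.IsRegular → lam < κ →
      Cofinally κ.ord (fun α => (b α).cof = lam) →
      (∀ mu : Cardinal.{0}, mu.IsRegular → mu < κ →
        Cofinally κ.ord (fun α => (b α).cof = mu) → lam ≤ mu) →
      bLeq κ.ord b = Cardinal.lift.{1} lam) ∧
    ((∀ lam : Cardinal.{0}, lam.IsRegular → lam < κ →
        BoundedIn κ.ord (fun α => (b α).cof = lam)) →
      (∃ S, IsStationaryIn S κ.ord ∧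
        ∀ ξ ∈ S, ∃ α, ξ ≤ α ∧ α < κ.ord ∧ (b α).cof.ord ≤ ξ) →
      bLeq κ.ord b = Cardinal.lift.{1} κ) ∧
    ((∀ lam : Cardinal.{0}, lam.IsRegular → lam < κ →
        BoundedIn κ.ord (fun α => (b α).cof = lam)) →
      (∃ C, IsClubIn C κ.ord ∧
        ∀ ξ ∈ C, ∀ α, ξ ≤ α → α < κ.ord → ξ < (b α).cof.ord) →
      Cardinal.lift.{1} (Order.succ κ) ≤ bLeq κ.ord b) := by
  classical
  have hκlim : Order.IsSuccLimit κ.ord := Cardinal.isSuccLimit_ord hκ.1.le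
  have hbLeq : bLeq κ.ord b = sInf {c : Cardinal.{1} | ∃ W, W ⊆ prodSet κ.ord b ∧
      (∀ x ∈ prodSet κ.ord b, ∃ y ∈ W, ¬ leStar κ.ord y x) ∧ c = #W} := rfl
  set NS : Set Cardinal.{1} := {c | ∃ W, W ⊆ prodSet κ.ord b ∧
      (∀ x ∈ prodSet κ.ord b, ∃ y ∈ W, ¬ leStar κ.ord y x) ∧ c = #W} with hNSdef
  have hNSne : NS.Nonempty :=
    ⟨#(prodSet κ.ord b), prodSet κ.ord b, subset_rfl,
      fun g hg => exists_not_leStar hκ hb hg, rfl⟩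
  have lower : ∀ lam : Cardinal.{0}, lam ≤ κ →
      (∀ mu : Cardinal.{0}, mu.IsRegular → mu < lam →
        BoundedIn κ.ord fun α => (b α).cof = mu) →
      ∀ c ∈ NS, Cardinal.lift.{1} lam ≤ c := by
    intro lam hlamκ hD c hc
    obtain ⟨W, hWsub, hWunb, rfl⟩ := hc
    by_contra hlt
    push_neg at hlt
    obtain ⟨μ, hμeq⟩ := Cardinal.mem_range_lift_of_le hlt.le
    have hμlam : μ < lam := by
      rw [← Cardinal.lift_lt.{0,1}, hμeq]; exact hlt
    have hμκ : μ < κ := lt_of_lt_of_le hμlam hlamκ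
    obtain ⟨β, hβ, htail⟩ := tail_cof hκ hb hμκ
      (fun l hreg hle => hD l hreg (lt_of_le_of_lt hle hμlam))
    obtain ⟨g, hg, hdom⟩ := dominated hb hWsub hβ (fun α h1 h2 => by
      rw [← hμeq]
      exact Cardinal.lift_lt.mpr (htail α h1 h2))
    obtain ⟨f, hfW, hnl⟩ := hWunb g hg
    exact hnl (hdom f hfW)
  have upper : ∀ ι : Ordinal.{0},
      (∀ g ∈ prodSet κ.ord b, ∃ f ∈ Ffam κ b '' Iio ι, ¬ leStar κ.ord f g) →
      sInf NS ≤ Cardinal.lift.{1} ι.card := by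
    intro ι hunb
    have hmem : #(Ffam κ b '' Iio ι) ∈ NS := by
      refine ⟨Ffam κ b '' Iio ι, ?_, hunb, rfl⟩
      rintro f ⟨i, hi, rfl⟩
      exact Ffam_mem hb i
    refine le_trans (csInf_le' hmem) ?_
    refine le_trans Cardinal.mk_image_le ?_
    rw [Ordinal.mk_Iio_ordinal]
  refine ⟨?_, ?_, ?_⟩
  · intro lam hreg hlam hcf hmin
    rw [hbLeq]
    refine le_antisymm ?_ (le_csInf hNSne (lower lam hlam.le (fun mu hmu hmulam =>
      boundedIn_of_not_cofinally hκlim (fun hcff =>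
        absurd (hmin mu hmu (hmulam.trans hlam) hcff) (not_le.mpr hmulam)))))
    have h := upper lam.ord (upper_i hκ hb hlam hcf)
    rwa [Cardinal.card_ord] at h
  · rintro h1 ⟨S, hS, hSp⟩
    rw [hbLeq]
    refine le_antisymm ?_ (le_csInf hNSne (lower κ le_rfl (fun mu hmu hmuκ => h1 mu hmu hmuκ)))
    have h := upper κ.ord (upper_ii hκ hb hS hSp)
    rwa [Cardinal.card_ord] at h
  · rintro h1 ⟨C, hC, hcb⟩
    rw [hbLeq]
    refine le_csInf hNSne (fun c hc => ?_)
    obtain ⟨W, hWsub, hWunb, rfl⟩ := hc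
    by_contra hlt
    push_neg at hlt
    rw [Cardinal.lift_succ] at hlt
    have hle : #W ≤ Cardinal.lift.{1} κ := Order.lt_succ_iff.mp hlt
    obtain ⟨g, hg, hdom⟩ := club_dominated hκ hb hC hcb hWsub hle
    obtain ⟨f, hfW, hnl⟩ := hWunb g hg
    exact hnl (hdom f hfW)

end BGBS
end

section
/- Let κ be strongly inaccessible and let b, h : κ → κ be increasing with b(α) an infinite cardinal and h(α) a nonzero cardinal for every α < κ, and h ≤ b pointwise. For each cardinal λ < κ put D_λ = {α < κ : h(α) = λ}. Then: (i) if there is a least cardinal λ < κ such that D_λ is cofinal in κ, then b_κ^{b,h}(∈*) = λ; (ii) if D_λ is bounded in κ for every λ < κ and h is continuous on some stationary set, then b_κ^{b,h}(∈*) = κ; (iii) if D_λ is bounded in κ for every λ < κ and h is discontinuous on some club set, then b_κ^{b,h}(∈*) ≥ κ⁺. -/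
open Cardinal Set

namespace BGBS

/-! ### Auxiliary lemmas -/

private lemma card_lt_of_ord_lt' {μ : Cardinal.{0}} {o : Ordinal.{0}} (h : μ.ord < o)
    (ho : IsCardOrd o) : μ < o.card := by
  by_contra hc
  push_neg at hc
  have h2 : o ≤ μ.ord := by
    have := Cardinal.ord_le_ord.2 hc
    rwa [ho] at this
  exact absurd (h2.trans_lt h) (lt_irrefl _)

private lemma exists_bound' {κ : Cardinal.{0}} (hreg : κ.IsRegular) {o : Ordinal.{0}}
    (ho : o < κ.ord) (F : Ordinal.{0} → Ordinal.{0}) (hF : ∀ ξ < o, F ξ < κ.ord) :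
    ∃ β < κ.ord, ∀ ξ < o, F ξ < β := by
  have hlim : Order.IsSuccLimit κ.ord := Cardinal.isSuccLimit_ord hreg.1
  have hB : Ordinal.bsup o (fun a _ => F a) < κ.ord :=
    Cardinal.bsup_lt_ord_of_isRegular hreg (Cardinal.lt_ord.1 ho) (fun i hi => hF i hi)
  refine ⟨_, hlim.succ_lt hB, fun ξ hξ => ?_⟩
  exact (Ordinal.le_bsup _ ξ hξ).trans_lt (Order.lt_succ _)

private lemma omega_limit' {κ : Cardinal.{0}} (hreg : κ.IsRegular) (hω : ℵ₀ < κ)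
    (z : ℕ → Ordinal.{0}) (hmono : ∀ n, z n < z (n+1)) (hlt : ∀ n, z n < κ.ord) :
    (⨆ n, z n) < κ.ord ∧ Order.IsSuccLimit (⨆ n, z n) ∧ (∀ n, z n < ⨆ n, z n) ∧
      (∀ ξ < ⨆ n, z n, ∃ n, ξ < z n) := by
  have hcof : #ℕ < κ.ord.cof := by
    rw [hreg.cof_eq, Cardinal.mk_nat]; exact hω
  have hsup : (⨆ n, z n) < κ.ord := Ordinal.iSup_lt_ord hcof hlt
  have hmem : ∀ n, z n < ⨆ n, z n := fun n =>
    (hmono n).trans_le (Ordinal.le_iSup z (n+1))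
  have hcofin : ∀ ξ < ⨆ n, z n, ∃ n, ξ < z n := fun ξ hξ =>
    Ordinal.lt_iSup_iff.1 hξ
  refine ⟨hsup, Ordinal.isSuccLimit_iff.2 ⟨?_, Order.isSuccPrelimit_iff_succ_lt.2 fun a ha => ?_⟩, hmem, hcofin⟩
  · intro h0
    exact absurd (h0 ▸ hmem 0) (fun hh => not_lt_zero hh)
  · obtain ⟨n, hn⟩ := hcofin a ha
    exact ((Order.succ_le_of_lt hn).trans_lt (hmem n)).trans_le (le_refl _)

private lemma csSup_isLimit' {S : Set Ordinal.{0}} (hne : S.Nonempty) (hbdd : BddAbove S)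
    (hns : sSup S ∉ S) : Order.IsSuccLimit (sSup S) ∧ ∀ ξ < sSup S, ∃ x ∈ S, ξ < x ∧ x < sSup S := by
  have hlt : ∀ x ∈ S, x < sSup S := fun x hx =>
    lt_of_le_of_ne (le_csSup hbdd hx) (fun h => hns (h ▸ hx))
  have happ : ∀ ξ < sSup S, ∃ x ∈ S, ξ < x ∧ x < sSup S := by
    intro ξ hξ
    obtain ⟨x, hx, hξx⟩ := exists_lt_of_lt_csSup hne hξ
    exact ⟨x, hx, hξx, hlt x hx⟩
  refine ⟨Ordinal.isSuccLimit_iff.2 ⟨?_, Order.isSuccPrelimit_iff_succ_lt.2 fun a ha => ?_⟩, happ⟩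
  · intro h0
    obtain ⟨x, hx⟩ := hne
    exact absurd (h0 ▸ hlt x hx) (fun hh => not_lt_zero hh)
  · obtain ⟨x, _, hax, hxs⟩ := happ a ha
    exact (Order.succ_le_of_lt hax).trans_lt hxs

private lemma closurePoints_club' {κ : Cardinal.{0}} (hreg : κ.IsRegular) (hω : ℵ₀ < κ)
    (F : Ordinal.{0} → Ordinal.{0}) (hF : ∀ ξ < κ.ord, F ξ < κ.ord) :
    IsClubIn {α | α < κ.ord ∧ Order.IsSuccLimit α ∧ ∀ ξ < α, F ξ < α} κ.ord := by
  have hlim : Order.IsSuccLimit κ.ord := Cardinal.isSuccLimit_ord hreg.1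
  refine ⟨fun α hα => hα.1, ?_, ?_⟩
  · intro β hβ
    have hstep : ∀ δ, δ < κ.ord → ∃ γ, γ < κ.ord ∧ δ < γ ∧ ∀ ξ < δ, F ξ < γ := by
      intro δ hδ
      obtain ⟨β', hβ', hβ''⟩ := exists_bound' hreg hδ F (fun ξ hξ => hF ξ (hξ.trans hδ))
      exact ⟨max β' (δ+1), max_lt hβ' (hlim.succ_lt hδ),
        (Order.lt_succ δ).trans_le (le_max_right _ _),
        fun ξ hξ => (hβ'' ξ hξ).trans_le (le_max_left _ _)⟩
    set g : Ordinal.{0} → Ordinal.{0} := fun δ =>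
      if hδ : δ < κ.ord then Classical.choose (hstep δ hδ) else 0 with hg
    have hgspec : ∀ δ, δ < κ.ord → g δ < κ.ord ∧ δ < g δ ∧ ∀ ξ < δ, F ξ < g δ := by
      intro δ hδ
      rw [hg]; simp only [dif_pos hδ]
      exact Classical.choose_spec (hstep δ hδ)
    set z : ℕ → Ordinal.{0} := fun n => Nat.rec (β+1) (fun _ p => g p) n with hz
    have hz0 : z 0 = β + 1 := rfl
    have hzs : ∀ n, z (n+1) = g (z n) := fun n => rfl
    have hzlt : ∀ n, z n < κ.ord := by
      intro n
      induction n with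
      | zero => rw [hz0]; exact hlim.succ_lt hβ
      | succ n ih => rw [hzs]; exact (hgspec _ ih).1
    have hzmono : ∀ n, z n < z (n+1) := fun n => by
      rw [hzs]; exact (hgspec _ (hzlt n)).2.1
    obtain ⟨hsup, hsl, hmem, hcofin⟩ := omega_limit' hreg hω z hzmono hzlt
    refine ⟨⨆ n, z n, ⟨hsup, hsl, ?_⟩, ?_⟩
    · intro ξ hξ
      obtain ⟨n, hn⟩ := hcofin ξ hξ
      have : F ξ < z (n+1) := by rw [hzs]; exact (hgspec _ (hzlt n)).2.2 ξ hn
      exact this.trans (hmem (n+1))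
    · have := hmem 0
      rw [hz0] at this
      exact (Order.lt_succ β).trans this
  · intro S hS hne ⟨β, hβ, hub⟩ hns
    have hbdd : BddAbove S := ⟨β, fun x hx => hub x hx⟩
    obtain ⟨hsl, happ⟩ := csSup_isLimit' hne hbdd hns
    refine ⟨(csSup_le hne hub).trans_lt hβ, hsl, ?_⟩
    intro ξ hξ
    obtain ⟨x, hx, hξx, hxs⟩ := happ ξ hξ
    exact ((hS hx).2.2 ξ hξx).trans hxs

private lemma escape' {κ : Cardinal.{0}} (hreg : κ.IsRegular)
    {h : Ordinal.{0} → Ordinal.{0}} (hcard : ∀ α < κ.ord, IsCardOrd (h α))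
    (hbnd : ∀ lam : Cardinal.{0}, lam < κ → BoundedIn κ.ord (fun α => h α = lam.ord)) :
    ∀ δ < κ.ord, ∃ α < κ.ord, δ < h α := by
  intro δ hδ
  by_contra hcon
  push_neg at hcon
  have hlim : Order.IsSuccLimit κ.ord := Cardinal.isSuccLimit_ord hreg.1
  set F : Ordinal.{0} → Ordinal.{0} := fun o =>
    if ho : o.card < κ then Classical.choose (hbnd o.card ho) else 0 with hF
  have hFspec : ∀ o : Ordinal.{0}, ∀ ho : o.card < κ,
      F o < κ.ord ∧ ∀ α, α < κ.ord → h α = o.card.ord → α < F o := by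
    intro o ho
    rw [hF]; simp only [dif_pos ho]
    obtain ⟨h1, h2⟩ := Classical.choose_spec (hbnd o.card ho)
    exact ⟨h1, h2⟩
  have hδ1 : δ + 1 < κ.ord := hlim.succ_lt hδ
  have hFlt : ∀ ξ < δ + 1, F ξ < κ.ord := by
    intro ξ hξ
    exact (hFspec ξ (Cardinal.lt_ord.1 (hξ.trans hδ1))).1
  obtain ⟨β, hβ, hβspec⟩ := exists_bound' hreg hδ1 F hFlt
  have hhβ : h β ≤ δ := hcon β hβ
  have hco : IsCardOrd (h β) := hcard β hβ
  have hcardlt : (h β).card < κ := by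
    have : h β < κ.ord := hhβ.trans_lt hδ
    exact Cardinal.lt_ord.1 this
  have h2 := (hFspec (h β) hcardlt).2 β hβ hco.symm
  have h3 : F (h β) < β := hβspec (h β) (hhβ.trans_lt (Order.lt_succ δ))
  exact absurd (h2.trans h3) (lt_irrefl _)

private lemma fixedSup_club' {κ : Cardinal.{0}} (hreg : κ.IsRegular) (hω : ℵ₀ < κ)
    {h : Ordinal.{0} → Ordinal.{0}} (hlt : ∀ ξ < κ.ord, h ξ < κ.ord)
    (hesc : ∀ δ < κ.ord, ∃ α < κ.ord, δ < h α)
    {C : Set Ordinal.{0}} (hC : IsClubIn C κ.ord) :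
    IsClubIn {γ | γ ∈ C ∧ Order.IsSuccLimit γ ∧ sSup (h '' Iio γ) = γ} κ.ord := by
  obtain ⟨hCsub, hCunb, hCcl⟩ := hC
  refine ⟨fun γ hγ => hCsub hγ.1, ?_, ?_⟩
  · intro β hβ
    have hstep : ∀ δ, δ < κ.ord → ∃ γ, γ ∈ C ∧ δ < γ ∧ (∀ ξ < δ, h ξ < γ) ∧
        (∃ α < γ, δ < h α) := by
      intro δ hδ
      obtain ⟨β₁, hβ₁, hβ₁s⟩ := exists_bound' hreg hδ h (fun ξ hξ => hlt ξ (hξ.trans hδ))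
      obtain ⟨α, hα, hαs⟩ := hesc δ hδ
      obtain ⟨γ, hγC, hγgt⟩ := hCunb (max δ (max β₁ α)) (max_lt hδ (max_lt hβ₁ hα))
      refine ⟨γ, hγC, (le_max_left _ _).trans_lt hγgt, ?_, α,
        ((le_max_right _ _).trans (le_max_right _ _)).trans_lt hγgt, hαs⟩
      intro ξ hξ
      exact (hβ₁s ξ hξ).trans_le (((le_max_left _ _).trans (le_max_right _ _)).trans hγgt.le)
    set g : Ordinal.{0} → Ordinal.{0} := fun δ =>
      if hδ : δ < κ.ord then Classical.choose (hstep δ hδ) else 0 with hg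
    have hgspec : ∀ δ, δ < κ.ord → g δ ∈ C ∧ δ < g δ ∧ (∀ ξ < δ, h ξ < g δ) ∧
        (∃ α < g δ, δ < h α) := by
      intro δ hδ
      rw [hg]; simp only [dif_pos hδ]
      exact Classical.choose_spec (hstep δ hδ)
    set z : ℕ → Ordinal.{0} := fun n => Nat.rec (g β) (fun _ p => g p) n with hz
    have hz0 : z 0 = g β := rfl
    have hzs : ∀ n, z (n+1) = g (z n) := fun n => rfl
    have hzC : ∀ n, z n ∈ C := by
      intro n
      induction n with
      | zero => exact (hgspec β hβ).1
      | succ n ih => rw [hzs]; exact (hgspec _ (hCsub ih)).1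
    have hzlt : ∀ n, z n < κ.ord := fun n => hCsub (hzC n)
    have hzmono : ∀ n, z n < z (n+1) := fun n => by
      rw [hzs]; exact (hgspec _ (hzlt n)).2.1
    obtain ⟨hsup, hsl, hmem, hcofin⟩ := omega_limit' hreg hω z hzmono hzlt
    set σ := ⨆ n, z n with hσ
    have hσC : σ ∈ C := by
      have hss : sSup (range z) = σ := rfl
      have hnm : sSup (range z) ∉ range z := by
        rw [hss]; rintro ⟨n, hn⟩
        exact absurd (hn ▸ hmem n) (lt_irrefl _)
      have := hCcl (range z) (fun x ⟨n, hn⟩ => hn ▸ hzC n) ⟨z 0, ⟨0, rfl⟩⟩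
        ⟨σ, hsup, fun x ⟨n, hn⟩ => hn ▸ (hmem n).le⟩ hnm
      rwa [hss] at this
    have hbddh : BddAbove (h '' Iio σ) := by
      refine ⟨κ.ord, ?_⟩
      rintro x ⟨ξ, hξ, rfl⟩
      exact (hlt ξ (hξ.trans hsup)).le
    refine ⟨σ, ⟨hσC, hsl, le_antisymm ?_ ?_⟩, (hgspec β hβ).2.1.trans_le (hz0 ▸ (hmem 0).le)⟩
    · apply csSup_le ⟨h 0, mem_image_of_mem h (Set.mem_Iio.2 hsl.pos)⟩
      rintro x ⟨ξ, hξ, rfl⟩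
      obtain ⟨n, hn⟩ := hcofin ξ hξ
      have : h ξ < z (n+1) := by rw [hzs]; exact (hgspec _ (hzlt n)).2.2.1 ξ hn
      exact this.le.trans (hmem (n+1)).le
    · rw [hσ]
      apply csSup_le ⟨z 0, mem_range_self 0⟩
      rintro x ⟨n, rfl⟩
      obtain ⟨α, hα, hαs⟩ := (hgspec _ (hzlt n)).2.2.2
      have hαmarch : α < σ := by
        have : α < z (n+1) := by rw [hzs]; exact hα
        exact this.trans (hmem (n+1))
      exact hαs.le.trans (le_csSup hbddh ⟨α, hαmarch, rfl⟩)
  · intro S hS hne ⟨β, hβ, hub⟩ hns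
    have hbdd : BddAbove S := ⟨β, fun x hx => hub x hx⟩
    obtain ⟨hsl, happ⟩ := csSup_isLimit' hne hbdd hns
    have hσκ : sSup S < κ.ord := (csSup_le hne hub).trans_lt hβ
    have hσC : sSup S ∈ C := hCcl S (fun x hx => (hS hx).1) hne ⟨β, hβ, hub⟩ hns
    have hbddh : ∀ γ ≤ sSup S, BddAbove (h '' Iio γ) := by
      intro γ hγ
      refine ⟨κ.ord, ?_⟩
      rintro x ⟨ξ, hξ, rfl⟩
      exact (hlt ξ ((hξ.trans_le hγ).trans hσκ)).le
    refine ⟨hσC, hsl, le_antisymm ?_ ?_⟩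
    · apply csSup_le ⟨h 0, mem_image_of_mem h (Set.mem_Iio.2 hsl.pos)⟩
      rintro x ⟨ξ, hξ, rfl⟩
      obtain ⟨y, hy, hξy, hys⟩ := happ ξ hξ
      have h1 : h ξ ≤ sSup (h '' Iio y) := le_csSup (hbddh y hys.le) ⟨ξ, hξy, rfl⟩
      rw [(hS hy).2.2] at h1
      exact h1.trans hys.le
    · apply csSup_le hne
      intro x hx
      have hxs : x < sSup S := lt_of_le_of_ne (le_csSup hbdd hx) (fun hh => hns (hh ▸ hx))
      have h1 : sSup (h '' Iio x) ≤ sSup (h '' Iio (sSup S)) :=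
        csSup_le_csSup (hbddh _ le_rfl) (Set.Nonempty.image h ⟨0, (hS hx).2.1.pos⟩)
          (image_mono (Iio_subset_Iio hxs.le))
      rw [(hS hx).2.2] at h1
      exact h1

private lemma small_family_caught' {κo : Ordinal.{0}} {b h : Ordinal.{0} → Ordinal.{0}}
    (hpos : ∀ α < κo, 0 < (h α).card)
    {W : Set (Ordinal.{0} → Ordinal.{0})} (hW : W ⊆ prodSet κo b)
    {μ : Cardinal.{0}} (hWμ : #W ≤ Cardinal.lift.{1} μ)
    {α₀ : Ordinal.{0}} (hα₀ : α₀ < κo)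
    (hesc : ∀ α, α₀ ≤ α → α < κo → μ < (h α).card) :
    ∃ φ ∈ slalomSet κo b h, ∀ f ∈ W, inStar κo f φ := by
  set φ : Ordinal.{0} → Set Ordinal.{0} := fun α =>
    if α₀ ≤ α ∧ α < κo then (fun f : Ordinal.{0} → Ordinal.{0} => f α) '' W else ∅ with hφ
  have hφmem : φ ∈ slalomSet κo b h := by
    intro α
    constructor
    · intro hα
      by_cases hc : α₀ ≤ α
      · rw [hφ]; simp only [if_pos (And.intro hc hα)]
        constructor
        · rintro x ⟨f, hf, rfl⟩
          exact Set.mem_Iio.2 ((hW hf α).1 hα)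
        · exact (Cardinal.mk_image_le).trans_lt
            (hWμ.trans_lt (Cardinal.lift_lt.2 (hesc α hc hα)))
      · rw [hφ]; simp only [if_neg (fun hh : α₀ ≤ α ∧ α < κo => hc hh.1)]
        refine ⟨empty_subset _, ?_⟩
        rw [Cardinal.mk_emptyCollection]
        have := Cardinal.lift_lt.2 (hpos α hα)
        rwa [Cardinal.lift_zero] at this
    · intro hα
      rw [hφ]; simp only [if_neg (fun hh : α₀ ≤ α ∧ α < κo => hα hh.2)]
  refine ⟨φ, hφmem, fun f hf => ⟨α₀, hα₀, fun α hαα hακ => ?_⟩⟩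
  rw [hφ]; simp only [if_pos (And.intro hαα.le hακ)]
  exact ⟨f, hf, rfl⟩

private lemma prod_witness' {κ : Cardinal.{0}} (hreg : κ.IsRegular)
    {b h : Ordinal.{0} → Ordinal.{0}}
    (hhb : ∀ α < κ.ord, (h α).card ≤ (b α).card) :
    ∀ φ ∈ slalomSet κ.ord b h, ∃ f ∈ prodSet κ.ord b, ¬ inStar κ.ord f φ := by
  intro φ hφ
  have hlim : Order.IsSuccLimit κ.ord := Cardinal.isSuccLimit_ord hreg.1
  have hex : ∀ α < κ.ord, ∃ x, x < b α ∧ x ∉ φ α := by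
    intro α hα
    by_contra hc
    push_neg at hc
    have hsub : Iio (b α) ⊆ φ α := fun x hx => hc x (Set.mem_Iio.1 hx)
    have h1 : Cardinal.lift.{1} (b α).card ≤ #(φ α) := by
      rw [← Ordinal.mk_Iio_ordinal]
      exact Cardinal.mk_le_mk_of_subset hsub
    have h2 : #(φ α) < Cardinal.lift.{1} (h α).card := ((hφ α).1 hα).2
    exact absurd ((h1.trans_lt h2).trans_le (Cardinal.lift_le.2 (hhb α hα)))
      (lt_irrefl _)
  set f : Ordinal.{0} → Ordinal.{0} := fun α =>
    if hα : α < κ.ord then Classical.choose (hex α hα) else 0 with hf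
  have hfspec : ∀ α, ∀ hα : α < κ.ord, f α < b α ∧ f α ∉ φ α := by
    intro α hα
    rw [hf]; simp only [dif_pos hα]
    exact Classical.choose_spec (hex α hα)
  refine ⟨f, ?_, ?_⟩
  · intro α
    constructor
    · intro hα; exact (hfspec α hα).1
    · intro hα; rw [hf]; simp only [dif_neg hα]
  · rintro ⟨β, hβ, hspec⟩
    have hβ1 : β + 1 < κ.ord := hlim.succ_lt hβ
    exact (hfspec (β+1) hβ1).2 (hspec (β+1) (Order.lt_succ β) hβ1)

/-- Triviality trichotomy for the avoidance number `b_κ^{b,h}(∈*)`,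
with `D_λ = {α < κ : h α = λ}` for cardinals `λ < κ`. -/
theorem stmt5 (κ : Cardinal.{0}) (hκ : κ.IsInaccessible)
    (b h : Ordinal.{0} → Ordinal.{0})
    (hbinc : IncreasingOn κ.ord b) (hhinc : IncreasingOn κ.ord h)
    (hb : ∀ α < κ.ord, b α < κ.ord ∧ IsInfCard (b α))
    (hh : ∀ α < κ.ord, IsCardOrd (h α) ∧ 0 < h α)
    (hhb : ∀ α < κ.ord, h α ≤ b α) :
    (∀ lam : Cardinal.{0}, lam < κ →
      Cofinally κ.ord (fun α => h α = lam.ord) →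
      (∀ mu : Cardinal.{0}, mu < κ →
        Cofinally κ.ord (fun α => h α = mu.ord) → lam ≤ mu) →
      bLoc κ.ord b h = Cardinal.lift.{1} lam) ∧
    ((∀ lam : Cardinal.{0}, lam < κ → BoundedIn κ.ord (fun α => h α = lam.ord)) →
      (∃ S, IsStationaryIn S κ.ord ∧ ContinuousOn κ.ord h S) →
      bLoc κ.ord b h = Cardinal.lift.{1} κ) ∧
    ((∀ lam : Cardinal.{0}, lam < κ → BoundedIn κ.ord (fun α => h α = lam.ord)) →
      (∃ C, IsClubIn C κ.ord ∧ DiscontinuousOn κ.ord h C) →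
      Cardinal.lift.{1} (Order.succ κ) ≤ bLoc κ.ord b h) := by
  have hreg : κ.IsRegular := hκ.isRegular
  obtain ⟨hω, _, hstrong⟩ := hκ
  have hκord : Order.IsSuccLimit κ.ord := Cardinal.isSuccLimit_ord hreg.1
  have hhκ : ∀ α < κ.ord, h α < κ.ord := fun α hα => (hhb α hα).trans_lt ((hb α hα).1)
  have hbpos : ∀ α < κ.ord, 0 < b α := by
    intro α hα
    rw [pos_iff_ne_zero]
    intro h0
    have := (hb α hα).2.2
    rw [h0, Ordinal.card_zero] at this
    simp only [nonpos_iff_eq_zero, le_zero_iff] at this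
    exact Cardinal.aleph0_ne_zero this
  have hhpos : ∀ α < κ.ord, 0 < (h α).card := by
    intro α hα
    have h0 : h α ≠ 0 := (pos_iff_ne_zero.1 (hh α hα).2)
    exact pos_iff_ne_zero.mpr (fun hc => h0 (Ordinal.card_eq_zero.1 hc))
  have hhbcard : ∀ α < κ.ord, (h α).card ≤ (b α).card := fun α hα =>
    Ordinal.card_le_card (hhb α hα)
  set T : Set Cardinal.{1} := { c | ∃ W, W ⊆ prodSet κ.ord b ∧
      (∀ φ ∈ slalomSet κ.ord b h, ∃ f ∈ W, ¬ inStar κ.ord f φ) ∧ c = #W } with hT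
  have hbLoc : bLoc κ.ord b h = sInf T := rfl
  have hTne : T.Nonempty :=
    ⟨#(prodSet κ.ord b), prodSet κ.ord b, subset_rfl, prod_witness' hreg hhbcard, rfl⟩
  set fam : Ordinal.{0} → Ordinal.{0} → Ordinal.{0} := fun ξ α =>
    if α < κ.ord ∧ ξ < b α then ξ else 0 with hfam
  have hfamprod : ∀ ξ, fam ξ ∈ prodSet κ.ord b := by
    intro ξ α
    constructor
    · intro hα
      by_cases hc : ξ < b α
      · rw [hfam]; simp only [if_pos (And.intro hα hc)]; exact hc
      · rw [hfam]; simp only [if_neg (fun hx : _ ∧ _ => hc hx.2)]; exact hbpos α hα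
    · intro hα
      rw [hfam]; simp only [if_neg (fun hx : _ ∧ _ => hα hx.1)]
  have hfamval : ∀ ξ α, α < κ.ord → ξ < b α → fam ξ α = ξ := by
    intro ξ α h1 h2; rw [hfam]; simp only [if_pos (And.intro h1 h2)]
  have hlower : ∀ (μ : Cardinal.{0}),
      (∃ α₀ < κ.ord, ∀ α, α₀ ≤ α → α < κ.ord → μ < (h α).card) →
      ∀ c ∈ T, ¬ (c ≤ Cardinal.lift.{1} μ) := by
    rintro μ ⟨α₀, hα₀, hesc⟩ c hc hcle
    obtain ⟨W, hWsub, hWprop, rfl⟩ := hc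
    obtain ⟨φ, hφ, hcatch⟩ := small_family_caught' hhpos hWsub hcle hα₀ hesc
    obtain ⟨f, hfW, hfnot⟩ := hWprop φ hφ
    exact hfnot (hcatch f hfW)
  refine ⟨?_, ?_, ?_⟩
  · -- Part (i)
    intro lam hlam hcof _hmin
    have hWsub : (fam '' Iio lam.ord) ⊆ prodSet κ.ord b := by
      rintro f ⟨ξ, _, rfl⟩; exact hfamprod ξ
    have hWprop : ∀ φ ∈ slalomSet κ.ord b h,
        ∃ f ∈ fam '' Iio lam.ord, ¬ inStar κ.ord f φ := by
      intro φ hφ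
      by_contra hcon
      push_neg at hcon
      have hall : ∀ ξ < lam.ord, inStar κ.ord (fam ξ) φ := fun ξ hξ =>
        hcon (fam ξ) ⟨ξ, hξ, rfl⟩
      set B : Ordinal.{0} → Ordinal.{0} := fun ξ =>
        if hξ : ξ < lam.ord then Classical.choose (hall ξ hξ) else 0 with hB
      have hBspec : ∀ ξ, ∀ hξ : ξ < lam.ord, B ξ < κ.ord ∧
          ∀ α, B ξ < α → α < κ.ord → fam ξ α ∈ φ α := by
        intro ξ hξ
        rw [hB]; simp only [dif_pos hξ]
        exact Classical.choose_spec (hall ξ hξ)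
      have hlamord : lam.ord < κ.ord := Cardinal.ord_lt_ord.2 hlam
      obtain ⟨β, hβ, hβs⟩ := exists_bound' hreg hlamord B (fun ξ hξ => (hBspec ξ hξ).1)
      obtain ⟨α, hβα, hακ, hhα⟩ := hcof β hβ
      have hsub : Iio lam.ord ⊆ φ α := by
        intro ξ hξ
        have hξb : ξ < b α := by
          have := hhb α hακ
          rw [hhα] at this
          exact hξ.trans_le this
        have h3 := (hBspec ξ hξ).2 α ((hβs ξ hξ).trans hβα) hακ
        rwa [hfamval ξ α hακ hξb] at h3
      have h1 : Cardinal.lift.{1} lam ≤ #(φ α) := by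
        have := Cardinal.mk_le_mk_of_subset hsub
        rwa [Ordinal.mk_Iio_ordinal, Cardinal.card_ord] at this
      have h2 : #(φ α) < Cardinal.lift.{1} lam := by
        have := ((hφ α).1 hακ).2
        rwa [hhα, Cardinal.card_ord] at this
      exact absurd (h1.trans_lt h2) (lt_irrefl _)
    have hub : bLoc κ.ord b h ≤ Cardinal.lift.{1} lam := by
      rw [hbLoc]
      refine (csInf_le (OrderBot.bddBelow T) ⟨_, hWsub, hWprop, rfl⟩).trans ?_
      calc #(fam '' Iio lam.ord) ≤ #(Iio lam.ord) := Cardinal.mk_image_le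
        _ = Cardinal.lift.{1} lam := by rw [Ordinal.mk_Iio_ordinal, Cardinal.card_ord]
    have hlb : Cardinal.lift.{1} lam ≤ bLoc κ.ord b h := by
      rw [hbLoc]
      apply le_csInf hTne
      intro c hc
      by_contra hlt
      push_neg at hlt
      obtain ⟨μ, hμlam, hμ⟩ := Cardinal.lt_lift_iff.1 hlt
      obtain ⟨α₀, h0α₀, hα₀κ, hhα₀⟩ := hcof 0 hκord.pos
      refine hlower μ ⟨α₀, hα₀κ, fun α hle hκ' => ?_⟩ c hc (le_of_eq hμ.symm)
      have hmono := hhinc α₀ α hle hκ'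
      rw [hhα₀] at hmono
      exact card_lt_of_ord_lt' ((Cardinal.ord_lt_ord.2 hμlam).trans_le hmono) (hh α hκ').1
    exact le_antisymm hub hlb
  · -- Part (ii)
    intro hbnd hSex
    obtain ⟨S, hSstat, hScont⟩ := hSex
    have hesc := escape' hreg (fun α hα => (hh α hα).1) hbnd
    have hlb : Cardinal.lift.{1} κ ≤ bLoc κ.ord b h := by
      rw [hbLoc]
      apply le_csInf hTne
      intro c hc
      by_contra hlt
      push_neg at hlt
      obtain ⟨μ, hμκ, hμ⟩ := Cardinal.lt_lift_iff.1 hlt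
      obtain ⟨α₀, hα₀κ, hα₀⟩ := hesc μ.ord (Cardinal.ord_lt_ord.2 hμκ)
      refine hlower μ ⟨α₀, hα₀κ, fun α hle hκ' => ?_⟩ c hc (le_of_eq hμ.symm)
      exact card_lt_of_ord_lt' (hα₀.trans_le (hhinc α₀ α hle hκ')) (hh α hκ').1
    have hWsub : (fam '' Iio κ.ord) ⊆ prodSet κ.ord b := by
      rintro f ⟨ξ, _, rfl⟩; exact hfamprod ξ
    have hWprop : ∀ φ ∈ slalomSet κ.ord b h,
        ∃ f ∈ fam '' Iio κ.ord, ¬ inStar κ.ord f φ := by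
      intro φ hφ
      by_contra hcon
      push_neg at hcon
      have hall : ∀ ξ < κ.ord, inStar κ.ord (fam ξ) φ := fun ξ hξ =>
        hcon (fam ξ) ⟨ξ, hξ, rfl⟩
      set B : Ordinal.{0} → Ordinal.{0} := fun ξ =>
        if hξ : ξ < κ.ord then Classical.choose (hall ξ hξ) else 0 with hB
      have hBspec : ∀ ξ, ∀ hξ : ξ < κ.ord, B ξ < κ.ord ∧
          ∀ α, B ξ < α → α < κ.ord → fam ξ α ∈ φ α := by
        intro ξ hξ
        rw [hB]; simp only [dif_pos hξ]
        exact Classical.choose_spec (hall ξ hξ)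
      set F : Ordinal.{0} → Ordinal.{0} := fun ξ => max (B ξ) (h ξ) with hF
      have hFlt : ∀ ξ < κ.ord, F ξ < κ.ord := fun ξ hξ =>
        max_lt ((hBspec ξ hξ).1) (hhκ ξ hξ)
      obtain ⟨γ, hγmem⟩ := hSstat.2 _ (closurePoints_club' hreg hω F hFlt)
      have hγS : γ ∈ S := hγmem.1
      obtain ⟨hγκ, hγlim, hγcls⟩ := hγmem.2
      have hcont := hScont γ hγS hγκ hγlim
      have hhγle : h γ ≤ γ := by
        rw [hcont]
        apply csSup_le (Set.Nonempty.image h ⟨0, Set.mem_Iio.2 hγlim.pos⟩)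
        rintro x ⟨ξ, hξ, rfl⟩
        exact ((le_max_right (B ξ) (h ξ)).trans_lt (hγcls ξ hξ)).le
      have hsub : Iio (h γ) ⊆ φ γ := by
        intro ξ hξ
        have hξγ : ξ < γ := hξ.trans_le hhγle
        have hξb : ξ < b γ := hξ.trans_le (hhb γ hγκ)
        have hBξ : B ξ < γ := (le_max_left (B ξ) (h ξ)).trans_lt (hγcls ξ hξγ)
        have h3 := (hBspec ξ (hξγ.trans hγκ)).2 γ hBξ hγκ
        rwa [hfamval ξ γ hγκ hξb] at h3
      have h1 : Cardinal.lift.{1} (h γ).card ≤ #(φ γ) := by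
        rw [← Ordinal.mk_Iio_ordinal]
        exact Cardinal.mk_le_mk_of_subset hsub
      exact absurd (h1.trans_lt ((hφ γ).1 hγκ).2) (lt_irrefl _)
    have hub : bLoc κ.ord b h ≤ Cardinal.lift.{1} κ := by
      rw [hbLoc]
      refine (csInf_le (OrderBot.bddBelow T) ⟨_, hWsub, hWprop, rfl⟩).trans ?_
      calc #(fam '' Iio κ.ord) ≤ #(Iio κ.ord) := Cardinal.mk_image_le
        _ = Cardinal.lift.{1} κ := by rw [Ordinal.mk_Iio_ordinal, Cardinal.card_ord]
    exact le_antisymm hub hlb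
  · -- Part (iii)
    intro hbnd hCex
    obtain ⟨C, hCclub, hCdisc⟩ := hCex
    have hesc := escape' hreg (fun α hα => (hh α hα).1) hbnd
    have hD := fixedSup_club' hreg hω (fun ξ hξ => hhκ ξ hξ) hesc hCclub
    set D : Set Ordinal.{0} := {γ | γ ∈ C ∧ Order.IsSuccLimit γ ∧ sSup (h '' Iio γ) = γ} with hDdef
    obtain ⟨hDsub, hDunb, hDcl⟩ := hD
    have hDkey : ∀ γ ∈ D, γ.card < (h γ).card := by
      intro γ hγ
      have hγκ : γ < κ.ord := hDsub hγ
      have hdisc := hCdisc γ hγ.1 hγκ hγ.2.1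
      rw [hγ.2.2] at hdisc
      by_contra hcc
      push_neg at hcc
      have hle : h γ ≤ γ := by
        calc h γ = (h γ).card.ord := (hh γ hγκ).1.symm
          _ ≤ γ.card.ord := Cardinal.ord_le_ord.2 hcc
          _ ≤ γ := Cardinal.ord_card_le γ
      exact absurd (hle.trans_lt hdisc) (lt_irrefl _)
    rw [hbLoc]
    apply le_csInf hTne
    intro c hc
    obtain ⟨W, hWsub, hWprop, rfl⟩ := hc
    by_contra hlt
    push_neg at hlt
    obtain ⟨c', hc', hceq⟩ := Cardinal.lt_lift_iff.1 hlt
    have hWκ : #W ≤ #(Iio κ.ord) := by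
      rw [Ordinal.mk_Iio_ordinal, Cardinal.card_ord, ← hceq]
      exact Cardinal.lift_le.2 (Order.lt_succ_iff.1 hc')
    rcases eq_empty_or_nonempty W with hWe | hWne
    · have hφ : (fun _ : Ordinal.{0} => (∅ : Set Ordinal.{0})) ∈ slalomSet κ.ord b h := by
        intro α
        refine ⟨fun hα => ⟨empty_subset _, ?_⟩, fun _ => rfl⟩
        rw [Cardinal.mk_emptyCollection]
        have := Cardinal.lift_lt.2 (hhpos α hα)
        rwa [Cardinal.lift_zero] at this
      obtain ⟨f, hfW, _⟩ := hWprop _ hφ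
      rw [hWe] at hfW
      exact absurd hfW (notMem_empty f)
    · haveI : Nonempty ↥W := hWne.to_subtype
      obtain ⟨j⟩ := (Cardinal.le_def _ _).1 hWκ
      set G : ↥(Iio κ.ord) → ↥W := Function.invFun j with hG
      have hGsur : ∀ w : ↥W, G (j w) = w := Function.leftInverse_invFun j.injective
      set F : Ordinal.{0} → Ordinal.{0} → Ordinal.{0} := fun ξ =>
        if hξ : ξ < κ.ord then ((G ⟨ξ, hξ⟩ : Ordinal.{0} → Ordinal.{0})) else fun _ => 0
        with hF
      have hFprod : ∀ ξ, F ξ ∈ prodSet κ.ord b := by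
        intro ξ
        by_cases hξ : ξ < κ.ord
        · rw [hF]; simp only [dif_pos hξ]; exact hWsub (G ⟨ξ, hξ⟩).2
        · rw [hF]; simp only [dif_neg hξ]
          intro α; exact ⟨fun hα => hbpos α hα, fun _ => rfl⟩
      set φ : Ordinal.{0} → Set Ordinal.{0} := fun α =>
        if hα : α < κ.ord then (fun ξ => F ξ α) '' Iio (sSup (D ∩ Iic α)) else ∅ with hφ
      have hγkey : ∀ α, α < κ.ord → (sSup (D ∩ Iic α)).card < (h α).card := by
        intro α hα
        rcases eq_empty_or_nonempty (D ∩ Iic α) with he | hne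
        · rw [he, csSup_empty]
          simpa using hhpos α hα
        · have hub' : ∀ x ∈ D ∩ Iic α, x ≤ α := fun x hx => hx.2
          have hle : sSup (D ∩ Iic α) ≤ α := csSup_le hne hub'
          have hmemD : sSup (D ∩ Iic α) ∈ D := by
            by_cases hin : sSup (D ∩ Iic α) ∈ D ∩ Iic α
            · exact hin.1
            · exact hDcl _ inter_subset_left hne ⟨α, hα, hub'⟩ hin
          exact (hDkey _ hmemD).trans_le
            (Ordinal.card_le_card (hhinc _ α hle hα))
      have hφmem : φ ∈ slalomSet κ.ord b h := by
        intro α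
        constructor
        · intro hα
          rw [hφ]; simp only [dif_pos hα]
          constructor
          · rintro x ⟨ξ, _, rfl⟩
            exact Set.mem_Iio.2 ((hFprod ξ α).1 hα)
          · calc #((fun ξ => F ξ α) '' Iio (sSup (D ∩ Iic α)))
                ≤ #(Iio (sSup (D ∩ Iic α))) := Cardinal.mk_image_le
              _ = Cardinal.lift.{1} (sSup (D ∩ Iic α)).card := Ordinal.mk_Iio_ordinal _
              _ < Cardinal.lift.{1} (h α).card := Cardinal.lift_lt.2 (hγkey α hα)
        · intro hα
          rw [hφ]; simp only [dif_neg hα]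
      obtain ⟨f, hfW, hfnot⟩ := hWprop φ hφmem
      apply hfnot
      obtain ⟨⟨ξ, hξ⟩, hji⟩ : ∃ i, G i = ⟨f, hfW⟩ := ⟨j ⟨f, hfW⟩, hGsur _⟩
      obtain ⟨γ₀, hγ₀D, hξγ₀⟩ := hDunb ξ hξ
      refine ⟨γ₀, hDsub hγ₀D, fun α hγα hακ => ?_⟩
      rw [hφ]; simp only [dif_pos hακ]
      refine ⟨ξ, ?_, ?_⟩
      · have hγsup : γ₀ ≤ sSup (D ∩ Iic α) :=
          le_csSup ⟨α, fun x hx => hx.2⟩ ⟨hγ₀D, hγα.le⟩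
        exact Set.mem_Iio.2 (hξγ₀.trans_le hγsup)
      · show F ξ α = f α
        have h5 : F ξ = ((G ⟨ξ, hξ⟩ : ↥W) : Ordinal.{0} → Ordinal.{0}) := by
          rw [hF]; exact dif_pos hξ
        rw [h5, hji]

end BGBS
end

section
/- Let κ be strongly inaccessible and let b, h : κ → κ be increasing with b(α) an infinite cardinal and h(α) a cardinal with 2 ≤ h(α) ≤ b(α) for every α < κ. If there exists a cardinal λ with 2 ≤ λ < κ such that {α < κ : h(α) = λ} is cofinal in κ, then d_κ^{b,h}(∈*) = 2^κ. -/
open Cardinal Set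

namespace BGBS

private theorem aux_pow_le {κ μ : Cardinal.{u}} (hreg : κ.IsRegular)
    (hsl : κ.IsStrongLimit) (hμ : μ < κ) : κ ^ μ ≤ κ := by
  classical
  have hω : ℵ₀ ≤ κ := hsl.aleph0_le
  obtain ⟨r, wo, hr⟩ := Cardinal.ord_eq κ.out
  rw [mk_out] at hr
  have e : κ ^ μ = #(μ.out → κ.out) := by
    have e0 := power_def κ.out μ.out
    rwa [mk_out, mk_out] at e0
  rw [e]
  have hbd : ∀ f : μ.out → κ.out, ∃ γ : κ.out, ∀ i, ¬ r γ (f i) := by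
    intro f
    have hsup : (⨆ i, Ordinal.typein r (f i)) < Ordinal.type r := by
      rw [← hr]
      refine Ordinal.iSup_lt_ord ?_ fun i => ?_
      · rw [mk_out, hreg.cof_eq]; exact hμ
      · rw [hr]; exact Ordinal.typein_lt_type r (f i)
    refine ⟨Ordinal.enum r ⟨_, hsup⟩, fun i hcontr => ?_⟩
    have h1 : Ordinal.typein r (f i) ≤ ⨆ i, Ordinal.typein r (f i) :=
      le_ciSup (Ordinal.bddAbove_range _) i
    have h2 : Ordinal.typein r (Ordinal.enum r ⟨_, hsup⟩) = ⨆ i, Ordinal.typein r (f i) :=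
      Ordinal.typein_enum r _
    have h3 := (Ordinal.typein_lt_typein r).2 hcontr
    rw [h2] at h3
    exact absurd h1 (not_le.2 h3)
  set F : (μ.out → κ.out) → Σ γ : κ.out, (μ.out → {x : κ.out // ¬ r γ x}) :=
    fun f => ⟨(hbd f).choose, fun i => ⟨f i, (hbd f).choose_spec i⟩⟩ with hF
  have hinj : Function.Injective F := by
    have : ∀ f, (fun i => ((F f).2 i).val) = f := fun f => rfl
    intro f g hfg
    rw [← this f, ← this g, hfg]
  refine le_trans (mk_le_of_injective hinj) ?_
  calc #(Σ γ : κ.out, (μ.out → {x : κ.out // ¬ r γ x}))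
      = sum (fun γ : κ.out => #(μ.out → {x : κ.out // ¬ r γ x})) := mk_sigma _
    _ ≤ sum (fun _ : κ.out => κ) := by
        refine sum_le_sum _ _ fun γ => ?_
        have hcard : #{x : κ.out // ¬ r γ x} < κ := by
          have hsub : {x : κ.out | ¬ r γ x} ⊆ {x | r x γ} ∪ {γ} := by
            intro x hx
            rcases (if h1 : r x γ then Or.inl h1 else if h2 : r γ x then Or.inr (Or.inr h2) else Or.inr (Or.inl (wo.trichotomous x γ h1 h2)) : r x γ ∨ x = γ ∨ r γ x) with h | h | h
            · exact Or.inl h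
            · exact Or.inr (by simpa using h)
            · exact absurd h hx
          refine lt_of_le_of_lt (mk_le_mk_of_subset hsub) ?_
          refine lt_of_le_of_lt (mk_union_le _ _) ?_
          have h1 : #{x : κ.out | r x γ} < κ := by
            have hct : #{x : κ.out // r x γ} = (Ordinal.typein r γ).card :=
              Ordinal.card_typein γ
            have ht : Ordinal.typein r γ < Ordinal.type r := Ordinal.typein_lt_type r γ
            rw [← hr, Cardinal.lt_ord] at ht
            calc #{x : κ.out | r x γ} = (Ordinal.typein r γ).card := hct
              _ < κ := ht
          have h2 : #({γ} : Set κ.out) = 1 := mk_singleton γ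
          rw [h2]
          exact add_lt_of_lt hω h1 (one_lt_aleph0.trans_le hω)
        rw [← power_def]
        calc #{x : κ.out // ¬ r γ x} ^ #μ.out ≤ (2 ^ #{x : κ.out // ¬ r γ x}) ^ #μ.out :=
              power_le_power_right (cantor _).le
          _ = 2 ^ (#{x : κ.out // ¬ r γ x} * #μ.out) := by rw [← power_mul]
          _ ≤ κ := by
              refine (hsl.two_power_lt ?_).le
              rw [mk_out]
              exact mul_lt_of_lt hω hcard hμ
    _ = #κ.out * κ := sum_const' _ _
    _ = κ := by rw [mk_out, mul_eq_self hω]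


private theorem aux_enum {κ : Cardinal.{0}} (hκ : ℵ₀ ≤ κ) {T : Type 1} [Nonempty T]
    (hT : #T ≤ Cardinal.lift.{1} κ) :
    ∃ E : Ordinal.{0} → T, ∀ t : T, ∀ β < κ.ord, ∃ α, β < α ∧ α < κ.ord ∧ E α = t := by
  classical
  have hKmk : #(↥(Iio κ.ord)) = Cardinal.lift.{1} κ := by
    rw [Ordinal.mk_Iio_ordinal, Cardinal.card_ord]
  have hprod : #(T × ↥(Iio κ.ord)) ≤ #(↥(Iio κ.ord)) := by
    rw [mk_prod, Cardinal.lift_id, Cardinal.lift_id, hKmk]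
    calc #T * Cardinal.lift.{1} κ ≤ Cardinal.lift.{1} κ * Cardinal.lift.{1} κ :=
          mul_le_mul_left hT _
      _ = Cardinal.lift.{1} κ := mul_eq_self (by rwa [← lift_aleph0.{1,0}, lift_le])
  obtain ⟨emb⟩ := (Cardinal.le_def _ _).1 hprod
  set E : Ordinal.{0} → T := fun α =>
    if hα : ∃ p : T × ↥(Iio κ.ord), ((emb p : ↥(Iio κ.ord)) : Ordinal) = α
    then hα.choose.1 else Classical.arbitrary T with hE
  refine ⟨E, fun t β hβ => ?_⟩
  by_contra hcon
  push_neg at hcon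
  -- every emb (t, γ) is ≤ β
  have hle : ∀ γ : ↥(Iio κ.ord), ((emb (t, γ) : ↥(Iio κ.ord)) : Ordinal) ≤ β := by
    intro γ
    by_contra hgt
    push_neg at hgt
    set α : Ordinal := ((emb (t, γ) : ↥(Iio κ.ord)) : Ordinal)
    have hαK : α < κ.ord := (emb (t, γ)).2
    have hEα : E α = t := by
      rw [hE]
      have hex : ∃ p : T × ↥(Iio κ.ord), ((emb p : ↥(Iio κ.ord)) : Ordinal) = α := ⟨(t, γ), rfl⟩
      simp only [dif_pos hex]
      have := hex.choose_spec
      have heq : emb hex.choose = emb (t, γ) := Subtype.ext this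
      have := emb.injective heq
      rw [this]
    exact hcon α hgt hαK hEα
  -- contradiction: κ.ord injects into Iic β
  have hβ1 : β + 1 < κ.ord := by
    have := (Cardinal.isSuccLimit_ord hκ).succ_lt hβ; rwa [Order.succ_eq_add_one] at this
  have hcard : Cardinal.lift.{1} κ ≤ Cardinal.lift.{1} (β + 1).card := by
    have hinj : Function.Injective
        (fun γ : ↥(Iio κ.ord) => (⟨(emb (t, γ) : ↥(Iio κ.ord)), lt_of_le_of_lt (hle γ)
          (lt_of_lt_of_le (lt_add_one β) le_rfl)⟩ : ↥(Iio (β + 1)))) := by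
      intro γ₁ γ₂ hγ
      simp only [Subtype.mk.injEq] at hγ
      have h2 : emb (t, γ₁) = emb (t, γ₂) := by
        have h0 := congrArg Subtype.val hγ
        exact Subtype.ext h0
      have h3 := emb.injective h2
      exact (Prod.mk.injEq _ _ _ _ ▸ h3).2
    have := mk_le_of_injective hinj
    rwa [hKmk, Ordinal.mk_Iio_ordinal] at this
  rw [Cardinal.lift_le] at hcard
  have : (β + 1).card < κ := Cardinal.lt_ord.1 hβ1
  exact absurd hcard (not_le.2 this)

private theorem aux_lower (κ : Cardinal.{0}) (hκ : κ.IsInaccessible)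
    (b h : Ordinal.{0} → Ordinal.{0})
    (hhinc : IncreasingOn κ.ord h)
    (hb : ∀ α < κ.ord, b α < κ.ord ∧ IsInfCard (b α))
    (hh : ∀ α < κ.ord, IsCardOrd (h α) ∧ 2 ≤ h α ∧ h α ≤ b α)
    (lam : Cardinal.{0}) (hlam2 : 2 ≤ lam) (hlt : lam < κ)
    (hcof : Cofinally κ.ord (fun α => h α = lam.ord))
    (W : Set (Ordinal.{0} → Set Ordinal.{0})) (hWsub : W ⊆ slalomSet κ.ord b h)
    (hWcov : ∀ f ∈ prodSet κ.ord b, ∃ y ∈ W, inStar κ.ord f y) :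
    Cardinal.lift.{1} (2 ^ κ) ≤ #W := by
  classical
  obtain ⟨hω', hreg, hsl⟩ := isInaccessible_def.1 hκ
  have hω : ℵ₀ ≤ κ := hω'.le
  have hK0 : (0 : Ordinal) < κ.ord := hreg.ord_pos
  -- the tail where h = lam.ord
  obtain ⟨a0, ha00, ha0K, ha0v⟩ := hcof 0 hK0
  have Hh : ∀ α, a0 ≤ α → α < κ.ord → h α = lam.ord := by
    intro α hge hltK
    obtain ⟨α₁, hgt1, hlt1, hv1⟩ := hcof α hltK
    refine le_antisymm ?_ ?_
    · rw [← hv1]; exact hhinc α α₁ hgt1.le hlt1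
    · rw [← ha0v]; exact hhinc a0 α hge hltK
  -- index types
  set ι : Type := lam.out with hι
  have hιmk : #ι = lam := mk_out lam
  set μc : Cardinal.{0} := max lam ℵ₀ with hμc
  have hμω : ℵ₀ ≤ μc := le_max_right _ _
  have hμκ : μc < κ := max_lt hlt hω'
  have hlamμ : lam ≤ μc := le_max_left _ _
  set ι2 : Type := μc.out with hι2
  have hι2mk : #ι2 = μc := mk_out μc
  -- the indexing function idx : ι → Iio lam.ord
  have hidx0 : #(ULift.{1} ι) = #(↥(Iio lam.ord)) := by
    rw [mk_uLift, hιmk, Ordinal.mk_Iio_ordinal, Cardinal.card_ord]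
  obtain ⟨eidx⟩ := Cardinal.eq.1 hidx0
  set idx : ι → Ordinal := fun i => ((eidx (ULift.up i) : ↥(Iio lam.ord)) : Ordinal) with hidx
  have hidx_lt : ∀ i, idx i < lam.ord := fun i => (eidx (ULift.up i)).2
  have hidx_inj : Function.Injective idx := by
    intro i j hij
    have h1 : eidx (ULift.up i) = eidx (ULift.up j) := Subtype.ext hij
    have h2 := eidx.injective h1
    exact congrArg ULift.down h2
  have hlam0 : (0 : Ordinal) < lam.ord := by
    rw [Cardinal.lt_ord, Ordinal.card_zero]
    exact lt_of_lt_of_le (by norm_num) hlam2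
  -- the type of tests
  haveI hTne : Nonempty ((ι2 → ↥(Iio κ.ord)) × (ι → ι2 → Bool)) :=
    ⟨⟨fun _ => ⟨0, hK0⟩, fun _ _ => false⟩⟩
  have hTle : #((ι2 → ↥(Iio κ.ord)) × (ι → ι2 → Bool)) ≤ Cardinal.lift.{1} κ := by
    rw [mk_prod, Cardinal.lift_id']
    have h1 : #(ι2 → ↥(Iio κ.ord)) ≤ Cardinal.lift.{1} κ := by
      rw [mk_arrow, Ordinal.mk_Iio_ordinal, Cardinal.card_ord, Cardinal.lift_id', hι2mk,
        ← Cardinal.lift_power]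
      exact Cardinal.lift_le.2 (aux_pow_le hreg hsl hμκ)
    have h2 : Cardinal.lift.{1} #(ι → ι2 → Bool) ≤ Cardinal.lift.{1} κ := by
      rw [Cardinal.lift_le]
      have e1 : #(ι2 → Bool) = 2 ^ μc := by
        rw [← Cardinal.power_def, mk_bool, hι2mk]
      have e2 : #(ι → ι2 → Bool) = (2 ^ μc) ^ lam := by
        rw [← Cardinal.power_def, e1, hιmk]
      rw [e2, ← Cardinal.power_mul]
      exact (hsl.two_power_lt (mul_lt_of_lt hω hμκ hlt)).le
    calc #(ι2 → ↥(Iio κ.ord)) * Cardinal.lift.{1} #(ι → ι2 → Bool)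
        ≤ Cardinal.lift.{1} κ * Cardinal.lift.{1} κ := mul_le_mul' h1 h2
      _ = Cardinal.lift.{1} κ := mul_eq_self (by rwa [← lift_aleph0.{1,0}, Cardinal.lift_le])
  obtain ⟨E, hE⟩ := aux_enum hω hTle
  -- the coding function
  set c : ((ι2 → ↥(Iio κ.ord)) × (ι → ι2 → Bool)) → Set Ordinal.{0} → Ordinal.{0} :=
    fun t A =>
      if hg : ∃ i : ι, ∀ j : ι2, (t.2 i j = true ↔ ((t.1 j : Ordinal) ∈ A))
      then idx hg.choose else 0 with hc
  have hc_lt : ∀ t A, c t A < lam.ord := by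
    intro t A
    show (if hg : ∃ i : ι, ∀ j : ι2, (t.2 i j = true ↔ ((t.1 j : Ordinal) ∈ A))
      then idx hg.choose else 0) < lam.ord
    by_cases hg : ∃ i : ι, ∀ j : ι2, (t.2 i j = true ↔ ((t.1 j : Ordinal) ∈ A))
    · rw [dif_pos hg]; exact hidx_lt _
    · rw [dif_neg hg]; exact hlam0
  -- the functions F A
  set F : Set Ordinal.{0} → (Ordinal.{0} → Ordinal.{0}) := fun A α =>
    if hα : a0 ≤ α ∧ α < κ.ord then c (E α) A else 0 with hF
  have hbpos : ∀ α, α < κ.ord → (0 : Ordinal) < b α := by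
    intro α hα
    have h2 := (hb α hα).2.2
    rcases eq_zero_or_pos (b α) with hz | hz
    · rw [hz] at h2; simp at h2
      exact absurd h2 Cardinal.aleph0_ne_zero
    · exact hz
  have hlamb : ∀ α, a0 ≤ α → α < κ.ord → lam.ord ≤ b α := by
    intro α hge hα
    rw [← Hh α hge hα]
    exact (hh α hα).2.2
  have hFmem : ∀ A, F A ∈ prodSet κ.ord b := by
    intro A
    intro α
    constructor
    · intro hα
      show (if hα : a0 ≤ α ∧ α < κ.ord then c (E α) A else 0) < b α
      by_cases hc1 : a0 ≤ α ∧ α < κ.ord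
      · rw [dif_pos hc1]
        exact lt_of_lt_of_le (hc_lt _ _) (hlamb α hc1.1 hα)
      · rw [dif_neg hc1]
        exact hbpos α hα
    · intro hα
      show (if hα : a0 ≤ α ∧ α < κ.ord then c (E α) A else 0) = 0
      rw [dif_neg (fun hc1 => hα hc1.2)]
  -- the key combinatorial step
  have hfiber : ∀ φ ∈ slalomSet κ.ord b h, ∀ A : ι → Set Ordinal.{0},
      (∀ i, A i ⊆ Iio κ.ord) → Function.Injective A →
      (∀ i, inStar κ.ord (F (A i)) φ) → False := by
    intro φ hφ A hAsub hAinj hAin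
    -- choose catching bounds
    have hbnd : ∀ i : ι, ∃ β, β < κ.ord ∧ ∀ γ, β < γ → γ < κ.ord → F (A i) γ ∈ φ γ := by
      intro i
      obtain ⟨β, hβK, hβ⟩ := hAin i
      exact ⟨β, hβK, hβ⟩
    choose β hβK hβ using hbnd
    have hβsup : (⨆ i, β i) < κ.ord := by
      refine Ordinal.iSup_lt_ord ?_ hβK
      rw [hιmk, hreg.cof_eq]
      exact hlt
    -- difference positions
    have hD : ∀ p : ι × ι, ∃ d : ↥(Iio κ.ord),
        p.1 ≠ p.2 → ¬(((d : Ordinal) ∈ A p.1) ↔ ((d : Ordinal) ∈ A p.2)) := by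
      intro p
      by_cases hp : p.1 = p.2
      · exact ⟨⟨0, hK0⟩, fun hne => absurd hp hne⟩
      · have hAne : A p.1 ≠ A p.2 := fun he => hp (hAinj he)
        have hnall : ¬ ∀ x, x ∈ A p.1 ↔ x ∈ A p.2 := fun hx => hAne (Set.ext hx)
        obtain ⟨d, hd⟩ := not_forall.1 hnall
        have hdK : d < κ.ord := by
          by_cases h1 : d ∈ A p.1
          · exact hAsub p.1 h1
          · by_cases h2 : d ∈ A p.2
            · exact hAsub p.2 h2
            · exact absurd (iff_of_false h1 h2) hd
        exact ⟨⟨d, hdK⟩, fun _ => hd⟩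
    choose D hDspec using hD
    -- the pairing embedding
    have hpair : #(ι × ι) ≤ #ι2 := by
      have he : #(ι × ι) = lam * lam := by rw [mk_prod, hιmk]; simp
      rw [he, hι2mk]
      calc lam * lam ≤ μc * μc := mul_le_mul' hlamμ hlamμ
        _ = μc := mul_eq_self hμω
    obtain ⟨e2⟩ := (Cardinal.le_def _ _).1 hpair
    -- the test
    set w : ι2 → ↥(Iio κ.ord) := fun j =>
      if hj : ∃ p : ι × ι, e2 p = j then D hj.choose else ⟨0, hK0⟩ with hw
    set p2 : ι → ι2 → Bool := fun i j =>
      if ((w j : Ordinal) ∈ A i) then true else false with hp2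
    have hgood : ∀ i j, (p2 i j = true ↔ ((w j : Ordinal) ∈ A i)) := by
      intro i j
      by_cases hm : ((w j : Ordinal) ∈ A i)
      · simp [hp2, hm]
      · simp [hp2, hm]
    have hweval : ∀ p : ι × ι, w (e2 p) = D p := by
      intro p
      have hex : ∃ q : ι × ι, e2 q = e2 p := ⟨p, rfl⟩
      show (if hj : ∃ q : ι × ι, e2 q = e2 p then D hj.choose else ⟨0, hK0⟩) = D p
      rw [dif_pos hex]
      have := hex.choose_spec
      have hq : hex.choose = p := e2.injective this
      rw [hq]
    -- evaluation of the code on the test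
    have hc_eq : ∀ i, c (w, p2) (A i) = idx i := by
      intro i
      have hex : ∃ i' : ι, ∀ j : ι2,
          (((w, p2) : (ι2 → ↥(Iio κ.ord)) × (ι → ι2 → Bool)).2 i' j = true ↔
            ((((w, p2) : (ι2 → ↥(Iio κ.ord)) × (ι → ι2 → Bool)).1 j : Ordinal) ∈ A i)) :=
        ⟨i, hgood i⟩
      show (if hg : ∃ i' : ι, ∀ j : ι2, (p2 i' j = true ↔ ((w j : Ordinal) ∈ A i))
        then idx hg.choose else 0) = idx i
      rw [dif_pos hex]
      congr 1
      by_contra hne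
      have hsp := hex.choose_spec
      have hiff : ∀ j : ι2, (((w j : Ordinal)) ∈ A hex.choose ↔ ((w j : Ordinal)) ∈ A i) := by
        intro j
        rw [← hsp j]
        exact (hgood hex.choose j).symm
      have hj := hiff (e2 (hex.choose, i))
      rw [hweval (hex.choose, i)] at hj
      exact hDspec (hex.choose, i) hne hj
    -- pick a coordinate
    obtain ⟨α, hα1, hα2, hα3⟩ := hE (w, p2) (max (⨆ i, β i) a0) (max_lt hβsup ha0K)
    have ha0α : a0 ≤ α := le_of_lt (lt_of_le_of_lt (le_max_right _ _) hα1)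
    have hFeval : ∀ i, F (A i) α = idx i := by
      intro i
      have : F (A i) α = c (E α) (A i) := dif_pos ⟨ha0α, hα2⟩
      rw [this, hα3, hc_eq]
    have hmem : ∀ i, idx i ∈ φ α := by
      intro i
      have h1 : β i < α := lt_of_le_of_lt (le_trans (le_ciSup (Ordinal.bddAbove_range _) i)
        (le_max_left _ _)) hα1
      have := hβ i α h1 hα2
      rwa [hFeval i] at this
    -- too many values in φ α
    have hginj : Function.Injective
        (fun i : ULift.{1} ι => (⟨idx i.down, hmem i.down⟩ : ↥(φ α))) := by
      intro i j hij
      simp only [Subtype.mk.injEq] at hij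
      have := hidx_inj hij
      exact ULift.ext i j this
    have hle2 : Cardinal.lift.{1} lam ≤ #↥(φ α) := by
      have := mk_le_of_injective hginj
      rwa [mk_uLift, hιmk] at this
    have hφα : #↥(φ α) < Cardinal.lift.{1} lam := by
      have := ((hφ α).1 hα2).2
      rwa [Hh α ha0α hα2, Cardinal.card_ord] at this
    exact absurd hle2 (not_le.2 hφα)
  -- assembly
  have hPmk : #↥(𝒫 (Iio κ.ord)) = Cardinal.lift.{1} (2 ^ κ) := by
    rw [mk_powerset, Ordinal.mk_Iio_ordinal, Cardinal.card_ord, Cardinal.lift_two_power]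
  have hchoice : ∀ A : ↥(𝒫 (Iio κ.ord)), ∃ y : ↥W, inStar κ.ord (F A.val) y.val := by
    intro A
    obtain ⟨y, hyW, hyin⟩ := hWcov (F A.val) (hFmem A.val)
    exact ⟨⟨y, hyW⟩, hyin⟩
  choose G hG using hchoice
  have hfib : ∀ y : ↥W, #{A : ↥(𝒫 (Iio κ.ord)) // G A = y} ≤ Cardinal.lift.{1} lam := by
    intro y
    by_contra hgt
    push_neg at hgt
    have hle3 : Cardinal.lift.{1} lam ≤ #{A : ↥(𝒫 (Iio κ.ord)) // G A = y} := hgt.le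
    rw [← hιmk, ← mk_uLift] at hle3
    obtain ⟨em⟩ := (Cardinal.le_def _ _).1 hle3
    refine hfiber y.val (hWsub y.2) (fun i => (((em ⟨i⟩).val : ↥(𝒫 (Iio κ.ord))) : Set Ordinal)) ?_ ?_ ?_
    · intro i
      exact ((em ⟨i⟩).val).2
    · intro i j hij
      have h1 : (em ⟨i⟩).val = (em ⟨j⟩).val := Subtype.ext hij
      have h2 : em ⟨i⟩ = em ⟨j⟩ := Subtype.ext h1
      have h3 := em.injective h2
      exact congrArg ULift.down h3
    · intro i
      have hGi := hG (em ⟨i⟩).val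
      rw [(em ⟨i⟩).2] at hGi
      exact hGi
  have hcount : Cardinal.lift.{1} (2 ^ κ) ≤ #↥W * Cardinal.lift.{1} lam := by
    rw [← hPmk]
    calc #↥(𝒫 (Iio κ.ord)) = #(Σ y : ↥W, {A : ↥(𝒫 (Iio κ.ord)) // G A = y}) :=
          (mk_congr (Equiv.sigmaFiberEquiv G)).symm
      _ = sum (fun y : ↥W => #{A : ↥(𝒫 (Iio κ.ord)) // G A = y}) := mk_sigma _
      _ ≤ sum (fun _ : ↥W => Cardinal.lift.{1} lam) := sum_le_sum _ _ hfib
      _ = #↥W * Cardinal.lift.{1} lam := sum_const' _ _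
  by_contra hWlt
  push_neg at hWlt
  have hlam2κ : Cardinal.lift.{1} lam < Cardinal.lift.{1} (2 ^ κ) :=
    Cardinal.lift_lt.2 (lt_of_lt_of_le hlt (cantor κ).le)
  have hbig : ℵ₀ ≤ Cardinal.lift.{1} (2 ^ κ) := by
    rw [← lift_aleph0.{1,0}, Cardinal.lift_le]
    exact hω.trans (cantor κ).le
  exact absurd hcount (not_le.2 (mul_lt_of_lt hbig hWlt hlam2κ))

/-- If `{α < κ : h α = λ}` is cofinal in `κ` for some cardinal `2 ≤ λ < κ`,
then the localisation number `d_κ^{b,h}(∈*)` equals `2^κ`. -/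
theorem stmt6 (κ : Cardinal.{0}) (hκ : κ.IsInaccessible)
    (b h : Ordinal.{0} → Ordinal.{0})
    (hbinc : IncreasingOn κ.ord b) (hhinc : IncreasingOn κ.ord h)
    (hb : ∀ α < κ.ord, b α < κ.ord ∧ IsInfCard (b α))
    (hh : ∀ α < κ.ord, IsCardOrd (h α) ∧ 2 ≤ h α ∧ h α ≤ b α)
    (lam : Cardinal.{0}) (hlam2 : 2 ≤ lam) (hlt : lam < κ)
    (hcof : Cofinally κ.ord (fun α => h α = lam.ord)) :
    dLoc κ.ord b h = Cardinal.lift.{1} (2 ^ κ) := by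
  classical
  have hω : ℵ₀ ≤ κ := hκ.1.le
  have hK0 : (0 : Ordinal) < κ.ord := hκ.isRegular.ord_pos
  set W₀ : Set (Ordinal.{0} → Set Ordinal.{0}) :=
    (fun (f : Ordinal.{0} → Ordinal.{0}) (α : Ordinal.{0}) =>
      if α < κ.ord then ({f α} : Set Ordinal.{0}) else ∅) '' (prodSet κ.ord b) with hW₀
  have hW₀sub : W₀ ⊆ slalomSet κ.ord b h := by
    rintro φ ⟨f, hf, rfl⟩
    intro α
    constructor
    · intro hα
      constructor
      · show (if α < κ.ord then ({f α} : Set Ordinal.{0}) else ∅) ⊆ Iio (b α)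
        rw [if_pos hα]
        intro x hx
        rw [Set.mem_singleton_iff] at hx
        rw [hx]
        exact Set.mem_Iio.2 ((hf α).1 hα)
      · show #↥(if α < κ.ord then ({f α} : Set Ordinal.{0}) else ∅) < Cardinal.lift.{1} (h α).card
        rw [if_pos hα, mk_singleton]
        have h2 : (2 : Cardinal.{0}) ≤ (h α).card := by
          have h3 := Ordinal.card_le_card (hh α hα).2.1
          rwa [Ordinal.card_ofNat] at h3
        calc (1 : Cardinal.{1}) < 2 := one_lt_two
          _ = Cardinal.lift.{1} (2 : Cardinal.{0}) := by simp
          _ ≤ Cardinal.lift.{1} (h α).card := Cardinal.lift_le.2 h2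
    · intro hα
      show (if α < κ.ord then ({f α} : Set Ordinal.{0}) else ∅) = ∅
      rw [if_neg hα]
  have hW₀cov : ∀ f ∈ prodSet κ.ord b, ∃ y ∈ W₀, inStar κ.ord f y := by
    intro f hf
    refine ⟨_, Set.mem_image_of_mem _ hf, 0, hK0, fun α _ hα => ?_⟩
    show f α ∈ (if α < κ.ord then ({f α} : Set Ordinal.{0}) else ∅)
    rw [if_pos hα]
    exact Set.mem_singleton _
  have hW₀card : #↥W₀ ≤ Cardinal.lift.{1} (2 ^ κ) := by
    have step1 : #↥(prodSet κ.ord b) ≤ #(↥(Iio κ.ord) → ↥(Iio κ.ord)) := by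
      refine mk_le_of_injective (f := fun (f : ↥(prodSet κ.ord b)) (α : ↥(Iio κ.ord)) =>
        (⟨f.val α.val, lt_trans ((f.2 α.val).1 α.2) (hb α.val α.2).1⟩ : ↥(Iio κ.ord))) ?_
      intro f g hfg
      apply Subtype.ext
      funext α
      by_cases hα : α < κ.ord
      · have h1 := congrFun hfg ⟨α, hα⟩
        simp only [Subtype.mk.injEq] at h1
        exact congrArg Subtype.val h1
      · rw [(f.2 α).2 hα, (g.2 α).2 hα]
    have step2 : #(↥(Iio κ.ord) → ↥(Iio κ.ord)) = Cardinal.lift.{1} (2 ^ κ) := by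
      rw [mk_arrow, Ordinal.mk_Iio_ordinal, Cardinal.card_ord, Cardinal.lift_id,
        ← Cardinal.lift_power, Cardinal.power_self_eq hω]
    exact le_trans (le_trans mk_image_le step1) step2.le
  unfold dLoc normOf
  apply le_antisymm
  · exact le_trans (csInf_le' ⟨W₀, hW₀sub, hW₀cov, rfl⟩) hW₀card
  · refine le_csInf ⟨#↥W₀, W₀, hW₀sub, hW₀cov, rfl⟩ ?_
    rintro c ⟨W, hWsub, hWcov, rfl⟩
    exact aux_lower κ hκ b h hhinc hb hh lam hlam2 hlt hcof W hWsub hWcov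

end BGBS
end

section
/- Let κ be strongly inaccessible and let b, h : κ → κ be increasing with b(α) an infinite cardinal and h(α) a nonzero cardinal for every α < κ, and h ≤ b pointwise. Assume {α < κ : h(α) = λ} is bounded in κ for every cardinal λ < κ, and h is continuous on some stationary subset of κ. Then every almost disjoint family A ⊆ ∏b satisfies |A| ≤ d_κ^{b,h}(∈*). -/
open Cardinal Set

namespace BGBS

/-! ### Auxiliary lemmas for `stmt7` -/

section Aux

open Ordinal

/-- Supremum of `B` over ordinals below `x`. -/
private noncomputable def supBelow (B : Ordinal.{0} → Ordinal.{0}) (x : Ordinal.{0}) :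
    Ordinal.{0} :=
  ⨆ i : x.ToType, B ((Ordinal.ToType.mk (o := x)).symm i).1

private lemma le_supBelow (B : Ordinal.{0} → Ordinal.{0}) {x ζ : Ordinal.{0}} (hζ : ζ < x) :
    B ζ ≤ supBelow B x := by
  have h1 := le_ciSup (f := fun i : x.ToType => B ((Ordinal.ToType.mk (o := x)).symm i).1)
    (Ordinal.bddAbove_range _) ((Ordinal.ToType.mk (o := x)) ⟨ζ, hζ⟩)
  simp at h1
  exact h1

private lemma iSup_lt_ord_of_reg {κ : Cardinal.{0}} (hreg : κ.IsRegular)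
    {ι : Type} (f : ι → Ordinal.{0}) (hι : #ι < κ) (hf : ∀ i, f i < κ.ord) :
    iSup f < κ.ord :=
  Ordinal.iSup_lt_ord (by rwa [hreg.cof_eq]) hf

private lemma supBelow_lt {κ : Cardinal.{0}} (hreg : κ.IsRegular)
    {B : Ordinal.{0} → Ordinal.{0}} {x : Ordinal.{0}} (hx : x < κ.ord)
    (hB : ∀ ζ, B ζ < κ.ord) : supBelow B x < κ.ord := by
  refine iSup_lt_ord_of_reg hreg _ ?_ fun i => hB _
  rw [Cardinal.mk_toType]
  exact Cardinal.lt_ord.mp hx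

private lemma bpos {κ : Cardinal.{0}} {b : Ordinal.{0} → Ordinal.{0}}
    (hb : ∀ α < κ.ord, b α < κ.ord ∧ IsInfCard (b α)) {α : Ordinal.{0}} (hα : α < κ.ord) :
    0 < b α := by
  rcases hb α hα with ⟨-, -, hinf⟩
  rw [pos_iff_ne_zero]
  intro he
  rw [he, Ordinal.card_zero] at hinf
  exact (Cardinal.aleph0_pos.not_ge) hinf

private lemma zero_mem_prodSet {κ : Cardinal.{0}} {b : Ordinal.{0} → Ordinal.{0}}
    (hb : ∀ α < κ.ord, b α < κ.ord ∧ IsInfCard (b α)) :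
    (fun _ => (0 : Ordinal.{0})) ∈ prodSet κ.ord b := by
  intro α
  exact ⟨fun hα => bpos hb hα, fun _ => rfl⟩

/-- `h` is unbounded below `κ.ord`. -/
private lemma h_unbounded {κ : Cardinal.{0}} {b h : Ordinal.{0} → Ordinal.{0}}
    (hκ : κ.IsInaccessible)
    (hh : ∀ α < κ.ord, IsCardOrd (h α) ∧ 0 < h α)
    (hhb : ∀ α < κ.ord, h α ≤ b α)
    (hb : ∀ α < κ.ord, b α < κ.ord ∧ IsInfCard (b α))
    (hbdd : ∀ lam : Cardinal.{0}, lam < κ → BoundedIn κ.ord (fun α => h α = lam.ord)) :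
    ∀ ζ < κ.ord, ∃ α, α < κ.ord ∧ ζ < h α := by
  intro ζ hζ
  have hKlim : Order.IsSuccLimit κ.ord := Cardinal.isSuccLimit_ord hκ.1.le
  set Bd : Ordinal.{0} → Ordinal.{0} := fun ξ =>
    if hξ : ξ.card < κ then (hbdd ξ.card hξ).choose else 0 with hBd
  have hBdspec : ∀ ξ : Ordinal.{0}, ξ.card < κ →
      Bd ξ < κ.ord ∧ ∀ α, α < κ.ord → h α = ξ.card.ord → α < Bd ξ := by
    intro ξ hξ
    have h1 := (hbdd ξ.card hξ).choose_spec
    rw [hBd]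
    simp only [dif_pos hξ]
    exact h1
  have hBdlt : ∀ ξ, Bd ξ < κ.ord := by
    intro ξ
    by_cases hξ : ξ.card < κ
    · exact (hBdspec ξ hξ).1
    · rw [hBd]; simp only [dif_neg hξ]; exact hKlim.pos
  set μ : Cardinal.{0} := ζ.card with hμ
  have hμκ : μ < κ := Cardinal.lt_ord.mp hζ
  set αs : Ordinal.{0} := supBelow Bd (μ.ord + 1) with hαs
  have hαslt : αs < κ.ord := by
    refine supBelow_lt hκ.isRegular ?_ hBdlt
    refine Cardinal.lt_ord.mpr ?_
    have : (μ.ord + 1).card = μ + 1 := by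
      simp [Ordinal.card_add, Cardinal.card_ord]
    rw [this]
    have h1 : μ + 1 ≤ μ + ℵ₀ := by
      exact add_le_add_right (Cardinal.one_le_aleph0) μ
    calc μ + 1 ≤ μ + ℵ₀ := h1
      _ < κ := Cardinal.add_lt_of_lt hκ.1.le hμκ hκ.1
  refine ⟨αs + 1, hKlim.succ_lt hαslt, ?_⟩
  by_contra hcon
  push_neg at hcon
  -- hcon : h (αs+1) ≤ ζ
  have hα1 : αs + 1 < κ.ord := hKlim.succ_lt hαslt
  have hcard : (h (αs + 1)).card ≤ μ := le_trans (Ordinal.card_le_card hcon) le_rfl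
  have hcardκ : (h (αs + 1)).card < κ := lt_of_le_of_lt hcard hμκ
  have hco : (h (αs + 1)).card.ord = h (αs + 1) := (hh _ hα1).1
  have hmem : h (αs + 1) < μ.ord + 1 := by
    have : h (αs + 1) ≤ μ.ord := by
      rw [← hco]
      exact Cardinal.ord_le_ord.mpr hcard
    exact lt_of_le_of_lt this (lt_add_one _)
  have h2 := (hBdspec (h (αs + 1)) hcardκ).2 (αs + 1) hα1 hco.symm
  have h3 : Bd (h (αs + 1)) ≤ αs := le_supBelow Bd hmem
  have h4 := lt_of_lt_of_le h2 h3
  exact lt_irrefl αs (lt_trans (lt_add_one αs) h4)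

/-- Key narrowness lemma: every slalom is, on an unbounded set of levels,
uniformly narrower than a fixed cardinal `lam < κ`. -/
private lemma slalom_narrow {κ : Cardinal.{0}} {b h : Ordinal.{0} → Ordinal.{0}}
    {S : Set Ordinal.{0}}
    (hκ : κ.IsInaccessible)
    (hh : ∀ α < κ.ord, IsCardOrd (h α) ∧ 0 < h α)
    (hhb : ∀ α < κ.ord, h α ≤ b α)
    (hb : ∀ α < κ.ord, b α < κ.ord ∧ IsInfCard (b α))
    (hSstat : IsStationaryIn S κ.ord)
    (hScont : ContinuousOn κ.ord h S)
    (φ : Ordinal.{0} → Set Ordinal.{0}) (hφ : φ ∈ slalomSet κ.ord b h) :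
    ∃ lam : Cardinal.{0}, ℵ₀ ≤ lam ∧ lam < κ ∧
      ∀ δ < κ.ord, ∃ γ, δ < γ ∧ γ < κ.ord ∧ #(φ γ) < Cardinal.lift.{1} lam := by
  have hKlim : Order.IsSuccLimit κ.ord := Cardinal.isSuccLimit_ord hκ.1.le
  -- at limit points of S, the width at γ is beaten by the `h`-value at an earlier level
  have key : ∀ γ, γ ∈ S → γ < κ.ord → Order.IsSuccLimit γ →
      ∃ α, α < γ ∧ #(φ γ) < Cardinal.lift.{1} (h α).card := by
    intro γ hγS hγκ hγlim
    by_contra hno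
    push_neg at hno
    have hlt : #(φ γ) < Cardinal.lift.{1} (h γ).card := ((hφ γ).1 hγκ).2
    obtain ⟨c₀, hc₀⟩ := Cardinal.mem_range_lift_of_le hlt.le
    have hord : ∀ α, α < γ → h α ≤ c₀.ord := by
      intro α hα
      have h1 : Cardinal.lift.{1} (h α).card ≤ #(φ γ) := hno α hα
      rw [← hc₀] at h1
      have h2 : (h α).card ≤ c₀ := Cardinal.lift_le.mp h1
      have h3 : (h α).card.ord = h α := (hh α (lt_trans hα hγκ)).1
      rw [← h3]
      exact Cardinal.ord_le_ord.mpr h2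
    have himg : sSup (h '' Iio γ) ≤ c₀.ord := by
      refine csSup_le ⟨h 0, ⟨0, hγlim.pos, rfl⟩⟩ ?_
      rintro x ⟨α, hα, rfl⟩
      exact hord α hα
    have hcγ : h γ ≤ c₀.ord := by
      rw [hScont γ hγS hγκ hγlim]
      exact himg
    have h4 : (h γ).card ≤ c₀ := by
      have := Ordinal.card_le_card hcγ
      rwa [Cardinal.card_ord] at this
    have h5 : #(φ γ) < #(φ γ) := by
      calc #(φ γ) < Cardinal.lift.{1} (h γ).card := hlt
        _ ≤ Cardinal.lift.{1} c₀ := Cardinal.lift_le.mpr h4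
        _ = #(φ γ) := hc₀
    exact absurd h5 (lt_irrefl _)
  -- pressing-down / club argument: some fixed earlier level works unboundedly often
  have main : ∃ α₀, α₀ < κ.ord ∧ ∀ δ, δ < κ.ord →
      ∃ γ, δ < γ ∧ γ < κ.ord ∧ #(φ γ) < Cardinal.lift.{1} (h α₀).card := by
    by_contra hcon
    push_neg at hcon
    -- hcon : ∀ α₀, α₀ < κ.ord → ∃ δ, δ < κ.ord ∧ ∀ γ, δ < γ → γ < κ.ord →
    --          ¬ (#(φ γ) < lift (h α₀).card)
    set B : Ordinal.{0} → Ordinal.{0} := fun ζ =>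
      if hζ : ζ < κ.ord then (hcon ζ hζ).choose else 0 with hB
    have hBspec : ∀ ζ, ζ < κ.ord → B ζ < κ.ord ∧
        ∀ γ, B ζ < γ → γ < κ.ord → Cardinal.lift.{1} (h ζ).card ≤ #(φ γ) := by
      intro ζ hζ
      have h1 := (hcon ζ hζ).choose_spec
      rw [hB]
      simp only [dif_pos hζ]
      exact ⟨h1.1, fun γ hγ1 hγ2 => h1.2 γ hγ1 hγ2⟩
    have hBlt : ∀ ζ, B ζ < κ.ord := by
      intro ζ
      by_cases hζ : ζ < κ.ord
      · exact (hBspec ζ hζ).1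
      · rw [hB]; simp only [dif_neg hζ]; exact hKlim.pos
    -- the club of limit closure points of B
    set C : Set Ordinal.{0} :=
      {γ | γ < κ.ord ∧ Order.IsSuccLimit γ ∧ ∀ ζ, ζ < γ → B ζ < γ} with hC
    have hclub : IsClubIn C κ.ord := by
      refine ⟨fun γ hγ => hγ.1, ?_, ?_⟩
      · -- unbounded
        intro β hβ
        set nxt : Ordinal.{0} → Ordinal.{0} := fun x => (max (supBelow B x) x) + 1 with hnxt
        have hnxtlt : ∀ x, x < κ.ord → nxt x < κ.ord := by
          intro x hx
          refine hKlim.succ_lt ?_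
          exact max_lt (supBelow_lt hκ.isRegular hx hBlt) hx
        have hxltnxt : ∀ x, x < nxt x := fun x =>
          lt_of_le_of_lt (le_max_right _ x) (lt_add_one _)
        set G : ℕ → Ordinal.{0} := fun n => Nat.recAux (β + 1) (fun _ x => nxt x) n with hG
        have hGκ : ∀ n, G n < κ.ord := by
          intro n
          induction n with
          | zero => exact hKlim.succ_lt hβ
          | succ n ih => exact hnxtlt _ ih
        have hGmono : ∀ n, G n < G (n + 1) := fun n => hxltnxt (G n)
        set γω : Ordinal.{0} := ⨆ n, G n with hγω
        have hbdd' : BddAbove (Set.range G) := Ordinal.bddAbove_range _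
        have hGle : ∀ n, G n ≤ γω := fun n => le_ciSup hbdd' n
        have hγωκ : γω < κ.ord := by
          refine iSup_lt_ord_of_reg hκ.isRegular _ ?_ hGκ
          rw [Cardinal.mk_nat]
          exact hκ.1
        have hlt' : ∀ a, a < γω → ∃ n, a < G n := by
          intro a ha
          exact (lt_ciSup_iff hbdd').mp ha
        have hγωlim : Order.IsSuccLimit γω := by
          refine Ordinal.isSuccLimit_iff.mpr ⟨?_, Order.isSuccPrelimit_iff_succ_lt.mpr ?_⟩
          · rw [← pos_iff_ne_zero]
            exact lt_of_lt_of_le (lt_of_le_of_lt (zero_le (a := β)) (lt_add_one β)) (hGle 0)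
          · intro a ha
            obtain ⟨n, hn⟩ := hlt' a ha
            have : Order.succ a ≤ G n := Order.succ_le_of_lt hn
            exact lt_of_le_of_lt this (lt_of_lt_of_le (hGmono n) (hGle (n + 1)))
        refine ⟨γω, ⟨hγωκ, hγωlim, ?_⟩, lt_of_lt_of_le (lt_add_one β) (hGle 0)⟩
        intro ζ hζ
        obtain ⟨n, hn⟩ := hlt' ζ hζ
        have h1 : B ζ ≤ supBelow B (G n) := le_supBelow B hn
        have h2 : supBelow B (G n) < G (n + 1) :=
          lt_of_le_of_lt (le_max_left _ _) (lt_add_one _)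
        exact lt_of_le_of_lt h1 (lt_of_lt_of_le h2 (hGle (n + 1)))
      · -- closed
        intro T hTC hTne hTbd hTnotmem
        obtain ⟨βb, hβbκ, hβb⟩ := hTbd
        have hbddT : BddAbove T := ⟨βb, fun x hx => hβb x hx⟩
        set δ := sSup T with hδ
        have hδβ : δ ≤ βb := csSup_le hTne hβb
        have hδκ : δ < κ.ord := lt_of_le_of_lt hδβ hβbκ
        have hwit : ∀ ζ, ζ < δ → ∃ t ∈ T, ζ < t := by
          intro ζ hζ
          by_contra hcon2
          push_neg at hcon2
          exact absurd (csSup_le hTne hcon2) (not_le.mpr hζ)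
        have hδlim : Order.IsSuccLimit δ := by
          refine Ordinal.isSuccLimit_iff.mpr ⟨?_, Order.isSuccPrelimit_iff_succ_lt.mpr ?_⟩
          · obtain ⟨t₀, ht₀⟩ := hTne
            have h1 : 0 < t₀ := (hTC ht₀).2.1.pos
            have h2 : t₀ ≤ δ := le_csSup hbddT ht₀
            exact pos_iff_ne_zero.mp (lt_of_lt_of_le h1 h2)
          · intro a ha
            obtain ⟨t, htT, hat⟩ := hwit a ha
            have h1 : t ≤ δ := le_csSup hbddT htT
            have h2 : t ≠ δ := fun he => hTnotmem (he ▸ htT)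
            exact lt_of_le_of_lt (Order.succ_le_of_lt hat) (lt_of_le_of_ne h1 h2)
        refine ⟨hδκ, hδlim, ?_⟩
        intro ζ hζ
        obtain ⟨t, htT, hζt⟩ := hwit ζ hζ
        exact lt_of_lt_of_le ((hTC htT).2.2 ζ hζt) (le_csSup hbddT htT)
    obtain ⟨γ₀, hγ₀S, hγ₀C⟩ := hSstat.2 C hclub
    obtain ⟨ζ₀, hζ₀γ, hζ₀n⟩ := key γ₀ hγ₀S hγ₀C.1 hγ₀C.2.1
    have hζ₀κ : ζ₀ < κ.ord := lt_trans hζ₀γ hγ₀C.1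
    have h1 : B ζ₀ < γ₀ := hγ₀C.2.2 ζ₀ hζ₀γ
    have h2 := (hBspec ζ₀ hζ₀κ).2 γ₀ h1 hγ₀C.1
    exact absurd hζ₀n (not_lt.mpr h2)
  obtain ⟨α₀, hα₀κ, hnar⟩ := main
  refine ⟨max (h α₀).card ℵ₀, le_max_right _ _, ?_, ?_⟩
  · refine max_lt ?_ hκ.1
    refine Cardinal.lt_ord.mp (lt_of_le_of_lt (hhb α₀ hα₀κ) (hb α₀ hα₀κ).1)
  · intro δ hδ
    obtain ⟨γ, h1, h2, h3⟩ := hnar δ hδ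
    exact ⟨γ, h1, h2, lt_of_lt_of_le h3 (Cardinal.lift_le.mpr (le_max_left _ _))⟩

/-- A slalom which is unboundedly often narrower than `lam` catches at most `lam`
members of an almost disjoint family. -/
private lemma catch_small {κ : Cardinal.{0}} {b : Ordinal.{0} → Ordinal.{0}}
    {A : Set (Ordinal.{0} → Ordinal.{0})} {φ : Ordinal.{0} → Set Ordinal.{0}}
    {lam : Cardinal.{0}}
    (hκ : κ.IsInaccessible)
    (hA : AlmostDisjointFamily κ.ord b A)
    (hinf : ℵ₀ ≤ lam) (hlam : lam < κ)
    (hnar : ∀ δ < κ.ord, ∃ γ, δ < γ ∧ γ < κ.ord ∧ #(φ γ) < Cardinal.lift.{1} lam) :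
    #{f : Ordinal.{0} → Ordinal.{0} | f ∈ A ∧ inStar κ.ord f φ} ≤ Cardinal.lift.{1} lam := by
  classical
  set X := {f : Ordinal.{0} → Ordinal.{0} | f ∈ A ∧ inStar κ.ord f φ} with hX
  by_contra hbig
  push_neg at hbig
  have hsucc : Cardinal.lift.{1} (Order.succ lam) ≤ #X := by
    rw [Cardinal.lift_succ]
    exact Order.succ_le_of_lt hbig
  have hslκ : Order.succ lam < κ := by
    have h1 : Order.succ lam ≤ 2 ^ lam := Order.succ_le_of_lt (Cardinal.cantor lam)
    exact lt_of_le_of_lt h1 (hκ.isStrongLimit.two_power_lt hlam)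
  have hslinf : ℵ₀ ≤ Order.succ lam := le_trans hinf (Order.le_succ lam)
  set T : Type := (Order.succ lam).ord.ToType with hT
  have hTmk : #T = Order.succ lam := Cardinal.mk_ord_toType _
  have hle : Cardinal.lift.{1, 0} #T ≤ Cardinal.lift.{0, 1} #↥X := by
    rw [hTmk]
    simpa using hsucc
  obtain ⟨emb⟩ := Cardinal.lift_mk_le'.mp hle
  have hmem : ∀ t : T, ((emb t : ↥X) : Ordinal.{0} → Ordinal.{0}) ∈ A ∧
      inStar κ.ord ((emb t : ↥X) : Ordinal.{0} → Ordinal.{0}) φ := fun t => (emb t).2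
  set F : T → Ordinal.{0} → Ordinal.{0} := fun t => ((emb t : ↥X) : Ordinal.{0} → Ordinal.{0})
    with hF
  have hFinj : Function.Injective F := by
    intro s t hst
    exact emb.injective (Subtype.ext hst)
  -- witnesses for localisation
  set βw : T → Ordinal.{0} := fun t => (hmem t).2.choose with hβw
  have hβspec : ∀ t, βw t < κ.ord ∧ ∀ α, βw t < α → α < κ.ord → F t α ∈ φ α := fun t =>
    (hmem t).2.choose_spec
  -- witnesses for almost disjointness
  set d : T × T → Ordinal.{0} := fun p =>
    if hp : F p.1 = F p.2 then 0 else
      (hA.2 (F p.1) (hmem p.1).1 (F p.2) (hmem p.2).1 hp).choose with hd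
  have hdspec : ∀ p : T × T, F p.1 ≠ F p.2 → d p < κ.ord ∧
      ∀ α, d p < α → α < κ.ord → F p.1 α ≠ F p.2 α := by
    intro p hp
    have h1 := (hA.2 (F p.1) (hmem p.1).1 (F p.2) (hmem p.2).1 hp).choose_spec
    rw [hd]
    simp only [dif_neg hp]
    exact h1
  have hKlim : Order.IsSuccLimit κ.ord := Cardinal.isSuccLimit_ord hκ.1.le
  have hdlt : ∀ p, d p < κ.ord := by
    intro p
    by_cases hp : F p.1 = F p.2
    · rw [hd]; simp only [dif_pos hp]; exact hKlim.pos
    · exact (hdspec p hp).1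
  have hTcard : #T < κ := by rw [hTmk]; exact hslκ
  have hTTcard : #(T × T) < κ := by
    have hp : #(T × T) = #T * #T := by simp
    rw [hp, hTmk, Cardinal.mul_eq_self hslinf]
    exact hslκ
  have hΔ1 : (⨆ p : T × T, d p) < κ.ord := iSup_lt_ord_of_reg hκ.isRegular _ hTTcard hdlt
  have hΔ2 : (⨆ t : T, βw t) < κ.ord :=
    iSup_lt_ord_of_reg hκ.isRegular _ hTcard fun t => (hβspec t).1
  set Δ : Ordinal.{0} := max (⨆ p : T × T, d p) (⨆ t : T, βw t) with hΔ
  have hΔκ : Δ < κ.ord := max_lt hΔ1 hΔ2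
  obtain ⟨γ, hΔγ, hγκ, hγnar⟩ := hnar Δ hΔκ
  have hval : ∀ t, F t γ ∈ φ γ := by
    intro t
    refine (hβspec t).2 γ ?_ hγκ
    refine lt_of_le_of_lt ?_ hΔγ
    exact le_trans (le_ciSup (Ordinal.bddAbove_range _) t) (le_max_right _ _)
  have hvalne : ∀ s t : T, s ≠ t → F s γ ≠ F t γ := by
    intro s t hst
    have hFne : F s ≠ F t := fun he => hst (hFinj he)
    refine (hdspec (s, t) hFne).2 γ ?_ hγκ
    refine lt_of_le_of_lt ?_ hΔγ
    exact le_trans (le_ciSup (Ordinal.bddAbove_range _) (s, t)) (le_max_left _ _)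
  set e2 : T ↪ ↥(φ γ) :=
    ⟨fun t => ⟨F t γ, hval t⟩, by
      intro s t hst
      by_contra hne
      exact hvalne s t hne (congrArg Subtype.val hst)⟩ with he2
  have h1 : Cardinal.lift.{1, 0} #T ≤ Cardinal.lift.{0, 1} #↥(φ γ) :=
    Cardinal.lift_mk_le'.mpr ⟨e2⟩
  have h2 : Cardinal.lift.{1} (Order.succ lam) ≤ #↥(φ γ) := by
    rw [hTmk] at h1
    simpa using h1
  have h3 : Cardinal.lift.{1} (Order.succ lam) < Cardinal.lift.{1} lam :=
    lt_of_le_of_lt h2 hγnar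
  have h4 : Order.succ lam < lam := Cardinal.lift_lt.mp h3
  exact absurd h4 (not_lt.mpr (Order.le_succ lam))

end Aux


section Aux2

/-- Singleton slaloms: a covering family always exists. -/
private lemma exists_covering {κ : Cardinal.{0}} {b h : Ordinal.{0} → Ordinal.{0}}
    (hκ : κ.IsInaccessible)
    (hb : ∀ α < κ.ord, b α < κ.ord ∧ IsInfCard (b α))
    (hh : ∀ α < κ.ord, IsCardOrd (h α) ∧ 0 < h α)
    (hbdd : ∀ lam : Cardinal.{0}, lam < κ → BoundedIn κ.ord (fun α => h α = lam.ord)) :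
    ∀ f ∈ prodSet κ.ord b, ∃ φ ∈ slalomSet κ.ord b h, inStar κ.ord f φ := by
  classical
  obtain ⟨β₁, hβ₁κ, hβ₁⟩ := hbdd 1 (lt_trans Cardinal.one_lt_aleph0 hκ.1)
  intro f hf
  refine ⟨fun α => if β₁ < α ∧ α < κ.ord then {f α} else ∅, ?_, β₁, hβ₁κ, ?_⟩
  · intro α
    beta_reduce
    constructor
    · intro hακ
      by_cases hc : β₁ < α ∧ α < κ.ord
      · rw [if_pos hc]
        constructor
        · intro x hx
          rw [Set.mem_singleton_iff] at hx
          rw [hx]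
          exact Set.mem_Iio.mpr ((hf α).1 hακ)
        · rw [Cardinal.mk_singleton]
          have h2 : 1 < (h α).card := by
            by_contra hle
            push_neg at hle
            rcases lt_or_eq_of_le hle with hlt1 | heq
            · have h3 : (h α).card = 0 := Cardinal.lt_one_iff_zero.mp hlt1
              have h4 : h α = 0 := Ordinal.card_eq_zero.mp h3
              exact (hh α hακ).2.ne' h4
            · have hord : h α = (1 : Cardinal.{0}).ord := by
                rw [← heq]
                exact ((hh α hακ).1).symm
              exact absurd (hβ₁ α hακ hord) (not_lt.mpr (le_of_lt hc.1))
          have h5 : (1 : Cardinal.{1}) = Cardinal.lift.{1, 0} (1 : Cardinal.{0}) := by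
            rw [Cardinal.lift_one]
          rw [h5]
          exact Cardinal.lift_lt.mpr h2
      · rw [if_neg hc]
        refine ⟨Set.empty_subset _, ?_⟩
        rw [Cardinal.mk_emptyCollection]
        have h6 : (h α).card ≠ 0 := fun he => (hh α hακ).2.ne' (Ordinal.card_eq_zero.mp he)
        exact pos_iff_ne_zero.mpr (fun he => h6 (Cardinal.lift_eq_zero.mp he))
    · intro hακ
      beta_reduce
      rw [if_neg (fun hc : β₁ < α ∧ α < κ.ord => hακ hc.2)]
  · intro α hβα hακ
    show f α ∈ if β₁ < α ∧ α < κ.ord then {f α} else ∅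
    rw [if_pos ⟨hβα, hακ⟩]
    exact Set.mem_singleton _

/-- Any covering family of slaloms has size at least `κ`. -/
private lemma covering_big {κ : Cardinal.{0}} {b h : Ordinal.{0} → Ordinal.{0}}
    {S : Set Ordinal.{0}}
    (hκ : κ.IsInaccessible)
    (hbinc : IncreasingOn κ.ord b)
    (hb : ∀ α < κ.ord, b α < κ.ord ∧ IsInfCard (b α))
    (hh : ∀ α < κ.ord, IsCardOrd (h α) ∧ 0 < h α)
    (hhb : ∀ α < κ.ord, h α ≤ b α)
    (hbdd : ∀ lam : Cardinal.{0}, lam < κ → BoundedIn κ.ord (fun α => h α = lam.ord))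
    (hSstat : IsStationaryIn S κ.ord)
    (hScont : ContinuousOn κ.ord h S)
    {W : Set (Ordinal.{0} → Set Ordinal.{0})} (hWsub : W ⊆ slalomSet κ.ord b h)
    (hWcov : ∀ f ∈ prodSet κ.ord b, ∃ φ ∈ W, inStar κ.ord f φ) :
    Cardinal.lift.{1} κ ≤ #↥W := by
  classical
  by_contra hlt
  push_neg at hlt
  have hKlim : Order.IsSuccLimit κ.ord := Cardinal.isSuccLimit_ord hκ.1.le
  have hunb := h_unbounded hκ hh hhb hb hbdd
  -- the family of eventually constant functions
  set g : Ordinal.{0} → (Ordinal.{0} → Ordinal.{0}) :=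
    fun η α => if η < b α ∧ α < κ.ord then η else 0 with hg
  have hgmem : ∀ η, g η ∈ prodSet κ.ord b := by
    intro η α
    constructor
    · intro hα
      by_cases hc : η < b α ∧ α < κ.ord
      · simp only [hg]
        rw [if_pos hc]
        exact hc.1
      · simp only [hg]
        rw [if_neg hc]
        exact bpos hb hα
    · intro hα
      simp only [hg]
      rw [if_neg (fun hc => hα hc.2)]
  have hne : ∀ η η', η < κ.ord → η' < κ.ord → η ≠ η' →
      AlmostAll κ.ord (fun α => g η α ≠ g η' α) := by
    intro η η' hη hη' hne'
    obtain ⟨α₁, hα₁κ, hα₁⟩ := hunb (max η η') (max_lt hη hη')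
    refine ⟨α₁, hα₁κ, ?_⟩
    intro α hα₁α hακ
    have hbα : max η η' < b α :=
      lt_of_lt_of_le (lt_of_lt_of_le hα₁ (hhb α₁ hα₁κ)) (hbinc α₁ α (le_of_lt hα₁α) hακ)
    have hc1 : η < b α ∧ α < κ.ord := ⟨lt_of_le_of_lt (le_max_left _ _) hbα, hακ⟩
    have hc2 : η' < b α ∧ α < κ.ord := ⟨lt_of_le_of_lt (le_max_right _ _) hbα, hακ⟩
    simp only [hg]
    rw [if_pos hc1, if_pos hc2]
    exact hne'
  have hA' : AlmostDisjointFamily κ.ord b (g '' Iio κ.ord) := by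
    constructor
    · rintro f ⟨η, hη, rfl⟩
      exact hgmem η
    · rintro f ⟨η, hη, rfl⟩ f' ⟨η', hη', rfl⟩ hff
      exact hne η η' hη hη' (fun he => hff (by rw [he]))
  have hginj : Set.InjOn g (Iio κ.ord) := by
    intro η hη η' hη' hgeq
    by_contra hne'
    obtain ⟨β, hβκ, hprop⟩ := hne η η' hη hη' hne'
    have hβ1 : β + 1 < κ.ord := hKlim.succ_lt hβκ
    exact hprop (β + 1) (lt_add_one β) hβ1 (by rw [hgeq])
  have hmkA' : #(g '' Iio κ.ord) = Cardinal.lift.{1} κ := by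
    rw [Cardinal.mk_image_eq_of_injOn g _ hginj, Ordinal.mk_Iio_ordinal, Cardinal.card_ord]
  -- narrow cardinals for slaloms in W
  choose lam hlaminf hlamκ hlamnar using
    fun (φ : ↥W) => slalom_narrow hκ hh hhb hb hSstat hScont φ.1 (hWsub φ.2)
  obtain ⟨φ₀, hφ₀W, -⟩ := hWcov _ (zero_mem_prodSet hb)
  haveI : Nonempty ↥W := ⟨⟨φ₀, hφ₀W⟩⟩
  -- reindex W by a small type
  obtain ⟨ν₀, hν₀⟩ := Cardinal.mem_range_lift_of_le hlt.le
  have hν₀κ : ν₀ < κ := by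
    have h1 : Cardinal.lift.{1} ν₀ < Cardinal.lift.{1} κ := by rw [hν₀]; exact hlt
    exact Cardinal.lift_lt.mp h1
  set T1 : Type := ν₀.ord.ToType with hT1
  have hT1mk : #T1 = ν₀ := Cardinal.mk_ord_toType _
  have hle2 : Cardinal.lift.{1, 0} #T1 = Cardinal.lift.{0, 1} #↥W := by
    rw [hT1mk]
    simpa using hν₀
  obtain ⟨e⟩ := Cardinal.lift_mk_eq'.mp hle2
  haveI : Nonempty T1 := ⟨e.symm (Classical.arbitrary _)⟩
  set μ : Cardinal.{0} := ⨆ t : T1, lam (e t) with hμ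
  have hμκ : μ < κ :=
    Cardinal.iSup_lt_of_isRegular hκ.isRegular (by rw [hT1mk]; exact hν₀κ) fun t => hlamκ _
  set X : ULift.{1, 0} T1 → Set (Ordinal.{0} → Ordinal.{0}) := fun t =>
    {f | f ∈ g '' Iio κ.ord ∧ inStar κ.ord f (e t.down).1} with hXdef
  have hsub : g '' Iio κ.ord ⊆ ⋃ t, X t := by
    intro f hf
    obtain ⟨φ, hφW, hin⟩ := hWcov f (hA'.1 hf)
    obtain ⟨t, ht⟩ := e.surjective ⟨φ, hφW⟩
    refine Set.mem_iUnion.mpr ⟨ULift.up t, hf, ?_⟩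
    show inStar κ.ord f (e t).1
    rw [ht]
    exact hin
  have hXle : ∀ t, #(X t) ≤ Cardinal.lift.{1} μ := by
    intro t
    refine le_trans (catch_small hκ hA' (hlaminf (e t.down)) (hlamκ _) (hlamnar _)) ?_
    refine Cardinal.lift_le.mpr ?_
    exact le_ciSup (Cardinal.bddAbove_range _) t.down
  have hbound : Cardinal.lift.{1} κ ≤ Cardinal.lift.{1} ν₀ * Cardinal.lift.{1} μ := by
    calc Cardinal.lift.{1} κ = #(g '' Iio κ.ord) := hmkA'.symm
      _ ≤ #(⋃ t, X t) := Cardinal.mk_le_mk_of_subset hsub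
      _ ≤ #(ULift.{1, 0} T1) * ⨆ t, #(X t) := Cardinal.mk_iUnion_le X
      _ ≤ #(ULift.{1, 0} T1) * Cardinal.lift.{1} μ := mul_le_mul_right (ciSup_le hXle) _
      _ = Cardinal.lift.{1} ν₀ * Cardinal.lift.{1} μ := by rw [Cardinal.mk_uLift, hT1mk]
  have h7 : Cardinal.lift.{1} κ ≤ Cardinal.lift.{1} (ν₀ * μ) := by
    rw [Cardinal.lift_mul]
    exact hbound
  have h8 : κ ≤ ν₀ * μ := Cardinal.lift_le.mp h7
  exact absurd h8 (not_le.mpr (Cardinal.mul_lt_of_lt hκ.1.le hν₀κ hμκ))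

end Aux2

/-- If `{α < κ : h α = λ}` is bounded for every cardinal `λ < κ` and `h` is
continuous on some stationary set, then every almost disjoint family
`A ⊆ ∏ b` satisfies `|A| ≤ d_κ^{b,h}(∈*)`. -/
theorem stmt7 (κ : Cardinal.{0}) (hκ : κ.IsInaccessible)
    (b h : Ordinal.{0} → Ordinal.{0})
    (hbinc : IncreasingOn κ.ord b) (hhinc : IncreasingOn κ.ord h)
    (hb : ∀ α < κ.ord, b α < κ.ord ∧ IsInfCard (b α))
    (hh : ∀ α < κ.ord, IsCardOrd (h α) ∧ 0 < h α)
    (hhb : ∀ α < κ.ord, h α ≤ b α)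
    (hbdd : ∀ lam : Cardinal.{0}, lam < κ → BoundedIn κ.ord (fun α => h α = lam.ord))
    (hcont : ∃ S, IsStationaryIn S κ.ord ∧ ContinuousOn κ.ord h S)
    (A : Set (Ordinal.{0} → Ordinal.{0}))
    (hA : AlmostDisjointFamily κ.ord b A) :
    #A ≤ dLoc κ.ord b h := by
  classical
  obtain ⟨S, hSstat, hScont⟩ := hcont
  have hcov0 := exists_covering hκ hb hh hbdd
  unfold dLoc normOf
  refine le_csInf ⟨#↥(slalomSet κ.ord b h), slalomSet κ.ord b h, subset_rfl, hcov0, rfl⟩ ?_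
  rintro c ⟨W, hWsub, hWcov, rfl⟩
  obtain ⟨φ₀, hφ₀W, -⟩ := hWcov _ (zero_mem_prodSet hb)
  haveI : Nonempty ↥W := ⟨⟨φ₀, hφ₀W⟩⟩
  choose lam hlaminf hlamκ hlamnar using
    fun (φ : ↥W) => slalom_narrow hκ hh hhb hb hSstat hScont φ.1 (hWsub φ.2)
  set X : ↥W → Set (Ordinal.{0} → Ordinal.{0}) := fun φ =>
    {f | f ∈ A ∧ inStar κ.ord f φ.1} with hXdef
  have hXle : ∀ φ : ↥W, #(X φ) ≤ Cardinal.lift.{1} κ := by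
    intro φ
    refine le_trans (catch_small hκ hA (hlaminf φ) (hlamκ φ) (hlamnar φ)) ?_
    exact Cardinal.lift_le.mpr (hlamκ φ).le
  have hsub : A ⊆ ⋃ φ, X φ := by
    intro f hf
    obtain ⟨φ, hφW, hin⟩ := hWcov f (hA.1 hf)
    exact Set.mem_iUnion.mpr ⟨⟨φ, hφW⟩, hf, hin⟩
  have hWbig : Cardinal.lift.{1} κ ≤ #↥W :=
    covering_big hκ hbinc hb hh hhb hbdd hSstat hScont hWsub hWcov
  have hWinf : ℵ₀ ≤ #↥W := by
    refine le_trans ?_ hWbig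
    rw [← Cardinal.lift_aleph0.{1, 0}]
    exact Cardinal.lift_le.mpr hκ.1.le
  calc #A ≤ #(⋃ φ, X φ) := Cardinal.mk_le_mk_of_subset hsub
    _ ≤ #↥W * ⨆ φ, #(X φ) := Cardinal.mk_iUnion_le X
    _ ≤ #↥W * Cardinal.lift.{1} κ := mul_le_mul_right (ciSup_le hXle) _
    _ ≤ #↥W * #↥W := mul_le_mul_right hWbig _
    _ = #↥W := Cardinal.mul_eq_self hWinf

end BGBS
end

section
/- Let κ be strongly inaccessible and let b : κ → κ satisfy 2 ≤ b(α) for every α < κ. If {α < κ : b(α) < ℵ₀} is cofinal in κ, then d_κ^b(≠^∞) = 2^κ, and moreover d_κ^{b,h}(∌^∞) = 2^κ for every h : κ → κ with 2 ≤ h(α) ≤ b(α) for all α < κ. -/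
/-!
The upper bounds hold because `∏ b` itself has size `2^κ`. For the lower bounds fix `n` with
`b α = n` for cofinally many `α`. These `κ` coordinates can be indexed by the pairs `(j, y)` of a
level `j < κ` and `n` distinct subsets `y₀, …, yₙ₋₁` of `j`, as `2^|j| < κ`. To `x ⊆ κ` attach the
function `fₓ` whose value at the coordinate `(j, y)` is the `m` with `x ∩ j = yₘ`.
Given `g ∈ ∏ b` and `β < κ`, no `n` distinct sets `x` can all have `fₓ α ≠ g α` for every `α > β`:
above the level `j₀` where their traces separate, κ many coordinates `(j, (xₖ ∩ j)ₖ)` occur, one of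
them is some `α > β`, and there `f_{xₘ}` takes the value `m = g α`. Hence a family `W` witnessing
the eventual difference for all `fₓ` covers at most `|W| · κ · n` of the `2^κ` sets `x`.
Singleton slaloms `{fₓ α}` reduce the anti-avoidance number to the same count.
-/


open Cardinal Set

namespace BGBS

lemma le_of_le_mul_mul_natCast {c w a : Cardinal} {n : ℕ} (hc : ℵ₀ ≤ c) (ha : a < c)
    (h : c ≤ w * a * n) : c ≤ w := by
  by_contra! hw
  exact h.not_gt
    (mul_lt_of_lt hc (mul_lt_of_lt hc hw ha) ((natCast_lt_aleph0 (n := n)).trans_le hc))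

lemma exists_nat_cofinally_eq {o : Ordinal.{0}} (ho : ℵ₀ < o.cof) {b : Ordinal.{0} → Ordinal.{0}}
    (h : Cofinally o fun α => b α < Ordinal.omega0) :
    ∃ n : ℕ, Cofinally o fun α => b α = n := by
  by_contra! hn
  simp only [Cofinally, not_forall, not_exists, not_and] at hn
  choose β hβo hβ using hn
  obtain ⟨α, hβα, hαo, hαω⟩ := h (⨆ n, β n) (Ordinal.iSup_lt_of_lt_cof (by simpa using ho) hβo)
  obtain ⟨m, hm⟩ := Ordinal.lt_omega0.1 hαω
  exact hβ m α ((Ordinal.le_iSup β m).trans_lt hβα) hαo hm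

lemma lift_le_mk_of_cofinally {κ : Cardinal.{0}} (hκ : κ.IsRegular) {P : Ordinal.{0} → Prop}
    (h : Cofinally κ.ord P) : Cardinal.lift.{1} κ ≤ #{α : Iio κ.ord | P α} := by
  have hcof : IsCofinal {α : Iio κ.ord | P α} := fun a => by
    obtain ⟨α, haα, hακ, hP⟩ := h a a.2
    exact ⟨⟨α, hακ⟩, hP, haα.le⟩
  calc Cardinal.lift.{1} κ = Order.cof (Iio κ.ord) := by
        rw [Ordinal.cof_Iio, ← Ordinal.lift_cof, hκ.cof_ord]
    _ ≤ _ := Order.cof_le hcof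

lemma exists_lt_of_injective {κ : Cardinal.{0}} (hκ : ℵ₀ ≤ κ) {f : Iio κ.ord → Ordinal.{0}}
    (hf : Function.Injective f) {β : Ordinal.{0}} (hβ : β < κ.ord) : ∃ j, β < f j := by
  by_contra! h
  have hle : #(Iio κ.ord) ≤ #(Iic β) :=
    mk_le_of_injective (f := fun j => ⟨f j, h j⟩) fun _ _ hj => hf (congrArg Subtype.val hj)
  rw [← Order.Iio_succ, mk_Iio_ordinal, mk_Iio_ordinal, lift_le, card_ord] at hle
  exact hle.not_gt (lt_ord.1 ((isSuccLimit_ord hκ).succ_lt hβ))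

lemma normOf_eq_of_forall_le {X Y : Type*} {Xs : Set X} {Ys : Set Y} {R : X → Y → Prop}
    {c : Cardinal} (hYs : ∀ x ∈ Xs, ∃ y ∈ Ys, R x y) (hle : #Ys ≤ c)
    (hge : ∀ W ⊆ Ys, (∀ x ∈ Xs, ∃ y ∈ W, R x y) → c ≤ #W) : normOf Xs Ys R = c := by
  unfold normOf
  have hmem : #Ys ∈ {c | ∃ W, W ⊆ Ys ∧ (∀ x ∈ Xs, ∃ y ∈ W, R x y) ∧ c = #W} :=
    ⟨Ys, subset_rfl, hYs, rfl⟩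
  exact le_antisymm ((csInf_le' hmem).trans hle)
    (le_csInf ⟨_, hmem⟩ fun _ ⟨W, hW, hcov, hc⟩ => hc ▸ hge W hW hcov)

lemma mk_prodSet_le {κ : Cardinal.{0}} (hκ : ℵ₀ ≤ κ) {b : Ordinal.{0} → Ordinal.{0}}
    (hb : ∀ α < κ.ord, b α < κ.ord) : #(prodSet κ.ord b) ≤ Cardinal.lift.{1} (2 ^ κ) := by
  have hinj : Function.Injective fun (f : prodSet κ.ord b) (j : Iio κ.ord) =>
      (⟨f.1 j, ((f.2 j).1 j.2).trans (hb j j.2)⟩ : Iio κ.ord) := by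
    intro f f' h
    ext α
    by_cases hα : α < κ.ord
    · exact congrArg Subtype.val (congrFun h ⟨α, hα⟩)
    · rw [(f.2 α).2 hα, (f'.2 α).2 hα]
  calc #(prodSet κ.ord b) ≤ #(Iio κ.ord → Iio κ.ord) := mk_le_of_injective hinj
    _ = Cardinal.lift.{1} (2 ^ κ) := by
      rw [← power_def, mk_Iio_ordinal, card_ord, power_self_eq (aleph0_le_lift.2 hκ),
        lift_two_power]

lemma ite_mem_prodSet {o : Ordinal.{0}} {b f : Ordinal.{0} → Ordinal.{0}}
    (hf : ∀ α < o, f α < b α) : (fun α => if α < o then f α else 0) ∈ prodSet o b := fun α =>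
  ⟨fun hα => by simpa only [if_pos hα] using hf α hα, fun hα => if_neg hα⟩

lemma exists_neStar {o : Ordinal.{0}} (ho : 0 < o) {b : Ordinal.{0} → Ordinal.{0}}
    (hb : ∀ α < o, 2 ≤ b α) (f : Ordinal.{0} → Ordinal.{0}) :
    ∃ g ∈ prodSet o b, neStar o f g := by
  refine ⟨_, ite_mem_prodSet (f := fun α => if f α = 0 then 1 else 0) fun α hα => ?_,
    0, ho, fun α _ hα => ?_⟩
  · refine lt_of_lt_of_le ?_ (hb α hα)
    split_ifs <;> norm_num
  · simp only [if_pos hα]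
    split_ifs with h <;> simp [h]

lemma exists_notInStar {o : Ordinal.{0}} (ho : 0 < o) {b h : Ordinal.{0} → Ordinal.{0}}
    (hhb : ∀ α < o, h α ≤ b α) {φ : Ordinal.{0} → Set Ordinal.{0}} (hφ : φ ∈ slalomSet o b h) :
    ∃ f ∈ prodSet o b, notInStar o φ f := by
  have hgap : ∀ α < o, ∃ y < b α, y ∉ φ α := fun α hα => by
    by_contra! hall
    have hφα : φ α = Iio (b α) := ((hφ α).1 hα).1.antisymm hall
    have hlt := ((hφ α).1 hα).2
    rw [hφα, mk_Iio_ordinal, lift_lt] at hlt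
    exact hlt.not_ge (Ordinal.card_le_card (hhb α hα))
  choose! y hyb hyφ using hgap
  exact ⟨_, ite_mem_prodSet hyb, 0, ho, fun α _ hα => by simpa only [if_pos hα] using hyφ α hα⟩

section Guessing

open Function

variable {o : Ordinal.{0}} {n : ℕ}

def trunc (j : Ordinal.{0}) (x : Set Ordinal.{0}) : Set (Iio j) := Subtype.val ⁻¹' x

/-- A level `j < o` together with `n` distinct candidates for `x ∩ j`. -/
def Guess (o : Ordinal.{0}) (n : ℕ) : Type 1 := (j : Iio o) × (Fin n ↪ Set (Iio j.1))

lemma mk_guess_le {κ : Cardinal.{0}} (hκ : κ.IsStrongLimit) (n : ℕ) :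
    #(Guess κ.ord n) ≤ Cardinal.lift.{1} κ := by
  have hκ1 : ℵ₀ ≤ Cardinal.lift.{1} κ := aleph0_le_lift.2 hκ.aleph0_le
  have hlevel : ∀ j : Iio κ.ord, #(Fin n ↪ Set (Iio j.1)) ≤ Cardinal.lift.{1} κ := fun j => calc
    #(Fin n ↪ Set (Iio j.1)) ≤ #(Fin n → Set (Iio j.1)) := mk_embedding_le_arrow _ _
    _ = Cardinal.lift.{1} (2 ^ j.1.card) ^ n := by
        rw [mk_arrow, mk_set, mk_Iio_ordinal, lift_uzero, mk_fin, lift_natCast, power_natCast,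
          lift_two_power]
    _ ≤ Cardinal.lift.{1} κ ^ n := by
        gcongr
        exact lift_le.2 (hκ.isStrongPrelimit (lt_ord.1 j.2)).le
    _ ≤ Cardinal.lift.{1} κ := power_nat_le hκ1
  calc #(Guess κ.ord n) = sum fun j : Iio κ.ord => #(Fin n ↪ Set (Iio j.1)) := mk_sigma _
    _ ≤ sum fun _ : Iio κ.ord => Cardinal.lift.{1} κ := sum_le_sum _ _ hlevel
    _ = Cardinal.lift.{1} κ := by
        rw [sum_const', mk_Iio_ordinal, card_ord, mul_eq_self hκ1]

open Classical in
noncomputable def Guess.index (r : Guess o n) (x : Set Ordinal.{0}) : ℕ :=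
  if h : ∃ m, r.2 m = trunc r.1 x then h.choose else 0

lemma Guess.index_eq {r : Guess o n} {x : Set Ordinal.{0}} {k : Fin n}
    (hk : r.2 k = trunc r.1 x) : r.index x = k := by
  have h : ∃ m, r.2 m = trunc r.1 x := ⟨k, hk⟩
  rw [Guess.index, dif_pos h, r.2.injective (h.choose_spec.trans hk.symm)]

lemma Guess.index_lt (hn : 0 < n) (r : Guess o n) (x : Set Ordinal.{0}) : r.index x < n := by
  unfold Guess.index
  split_ifs with h
  · exact h.choose.2
  · exact hn

open Classical in
noncomputable def code (ι : Guess o n → Ordinal.{0}) (x : Set Ordinal.{0}) (α : Ordinal.{0}) :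
    Ordinal.{0} :=
  if h : ∃ r, ι r = α then (h.choose.index x : Ordinal) else 0

lemma code_apply {ι : Guess o n → Ordinal.{0}} (hι : Injective ι) (x : Set Ordinal.{0})
    (r : Guess o n) : code ι x (ι r) = r.index x := by
  have h : ∃ r', ι r' = ι r := ⟨r, rfl⟩
  rw [code, dif_pos h, hι h.choose_spec]

lemma code_mem_prodSet {b : Ordinal.{0} → Ordinal.{0}} {ι : Guess o n → Ordinal.{0}}
    (hι : Injective ι) (hιo : ∀ r, ι r < o) (hιb : ∀ r, b (ι r) = n)
    (hb : ∀ α < o, 0 < b α) (x : Set Ordinal.{0}) : code ι x ∈ prodSet o b := by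
  intro α
  by_cases h : ∃ r, ι r = α
  · obtain ⟨r, rfl⟩ := h
    refine ⟨fun hr => ?_, fun hr => absurd (hιo r) hr⟩
    have hn : 0 < n := by exact_mod_cast hιb r ▸ hb _ hr
    rw [code_apply hι, hιb]
    exact_mod_cast r.index_lt hn x
  · simp only [code, dif_neg h, implies_true, and_true]
    exact hb α

lemma exists_injective_trunc (ho : Order.IsSuccLimit o) {u : Fin n → Set Ordinal.{0}}
    (hu : Injective u) (huo : ∀ k, u k ⊆ Iio o) :
    ∃ j₀ < o, ∀ j, j₀ ≤ j → Injective fun k => trunc j (u k) := by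
  have hsep : ∀ k k', ∃ i < o, k ≠ k' → ¬ (i ∈ u k ↔ i ∈ u k') := by
    intro k k'
    by_cases hkk : k = k'
    · exact ⟨0, ho.bot_lt, fun h => (h hkk).elim⟩
    obtain ⟨i, hi⟩ : ∃ i, ¬ (i ∈ u k ↔ i ∈ u k') := by
      by_contra! h
      exact hkk (hu (Set.ext h))
    refine ⟨i, ?_, fun _ => hi⟩
    by_cases hik : i ∈ u k
    · exact huo k hik
    · exact huo k' (by tauto)
  choose sep hsep_lt hsep using hsep
  refine ⟨Finset.univ.sup fun p : Fin n × Fin n => Order.succ (sep p.1 p.2), ?_, ?_⟩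
  · exact (Finset.sup_lt_iff ho.bot_lt).2 fun p _ => ho.succ_lt (hsep_lt p.1 p.2)
  · intro j hj k k' hkk
    by_contra hne
    have hlt : sep k k' < j := (Order.lt_succ _).trans_le
      ((Finset.le_sup (f := fun p : Fin n × Fin n => Order.succ (sep p.1 p.2))
        (Finset.mem_univ (k, k'))).trans hj)
    exact hsep k k' hne (by simpa [trunc] using congrArg ((⟨sep k k', hlt⟩ : Iio j) ∈ ·) hkk)

lemma exists_code_eq {κ : Cardinal.{0}} (hκ : ℵ₀ ≤ κ) {ι : Guess κ.ord n → Ordinal.{0}}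
    (hι : Injective ι) {u : Fin n → Set Ordinal.{0}} (hu : Injective u)
    (huκ : ∀ k, u k ⊆ Iio κ.ord) {β : Ordinal.{0}} (hβ : β < κ.ord) :
    ∃ r, β < ι r ∧ ∀ k, code ι (u k) (ι r) = k := by
  obtain ⟨j₀, hj₀, hinj⟩ := exists_injective_trunc (isSuccLimit_ord hκ) hu huκ
  let r : Iio κ.ord → Guess κ.ord n := fun j =>
    ⟨⟨j₀ + j, Ordinal.isPrincipal_add_ord hκ hj₀ j.2⟩,
      ⟨fun k => trunc (j₀ + j) (u k), hinj _ le_self_add⟩⟩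
  have hr : Injective r := fun j j' h =>
    Subtype.ext (add_left_cancel (congrArg (fun r : Guess κ.ord n => r.1.1) h))
  obtain ⟨j, hj⟩ := exists_lt_of_injective hκ (hι.comp hr) hβ
  exact ⟨r j, hj, fun k => by rw [code_apply hι, Guess.index_eq rfl]⟩

lemma mk_setOf_code_ne_lt {κ : Cardinal.{0}} (hκ : ℵ₀ ≤ κ) {b : Ordinal.{0} → Ordinal.{0}}
    {ι : Guess κ.ord n → Ordinal.{0}} (hι : Injective ι) (hικ : ∀ r, ι r < κ.ord)
    (hιb : ∀ r, b (ι r) = n) {g : Ordinal.{0} → Ordinal.{0}} (hg : g ∈ prodSet κ.ord b)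
    {β : Ordinal.{0}} (hβ : β < κ.ord) :
    #{x : Set Ordinal.{0} | x ⊆ Iio κ.ord ∧ ∀ α, β < α → α < κ.ord → code ι x α ≠ g α} < n := by
  by_contra! h
  obtain ⟨e⟩ : Nonempty (Fin n ↪
      {x : Set Ordinal.{0} | x ⊆ Iio κ.ord ∧ ∀ α, β < α → α < κ.ord → code ι x α ≠ g α}) := by
    rwa [← lift_mk_le', mk_fin, lift_natCast, lift_uzero]
  obtain ⟨r, hβr, hr⟩ := exists_code_eq hκ hι (u := fun k => (e k).1)
    (Subtype.val_injective.comp e.injective) (fun k => (e k).2.1) hβ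
  have hgr : g (ι r) < n := hιb r ▸ (hg (ι r)).1 (hικ r)
  obtain ⟨m, hm⟩ := Ordinal.lt_omega0.1 (hgr.trans (Ordinal.natCast_lt_omega0 n))
  have hmn : m < n := by exact_mod_cast hm ▸ hgr
  exact (e ⟨m, hmn⟩).2.2 (ι r) hβr (hικ r) (by rw [hr, hm])

lemma lift_two_power_le_of_forall_neStar {κ : Cardinal.{0}} (hκ : ℵ₀ ≤ κ)
    {b : Ordinal.{0} → Ordinal.{0}} {ι : Guess κ.ord n → Ordinal.{0}} (hι : Injective ι)
    (hικ : ∀ r, ι r < κ.ord) (hιb : ∀ r, b (ι r) = n) {W : Set (Ordinal.{0} → Ordinal.{0})}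
    (hW : W ⊆ prodSet κ.ord b) (hcov : ∀ x ⊆ Iio κ.ord, ∃ g ∈ W, neStar κ.ord (code ι x) g) :
    Cardinal.lift.{1} (2 ^ κ) ≤ #W := by
  let S : W × Iio κ.ord → Set (Set Ordinal.{0}) := fun p =>
    {x | x ⊆ Iio κ.ord ∧ ∀ α, p.2.1 < α → α < κ.ord → code ι x α ≠ p.1.1 α}
  have hcover : 𝒫 Iio κ.ord ⊆ ⋃ p, S p := fun x hx => by
    obtain ⟨g, hgW, β, hβ, hne⟩ := hcov x hx
    exact mem_iUnion.2 ⟨(⟨g, hgW⟩, ⟨β, hβ⟩), hx, hne⟩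
  have hS : ∀ p, #(S p) ≤ n := fun p =>
    (mk_setOf_code_ne_lt hκ hι hικ hιb (hW p.1.2) p.2.2).le
  have hκ1 : ℵ₀ ≤ Cardinal.lift.{1} κ := aleph0_le_lift.2 hκ
  rw [lift_two_power]
  refine le_of_le_mul_mul_natCast (hκ1.trans (cantor _).le) (cantor _) (n := n) ?_
  calc 2 ^ Cardinal.lift.{1} κ = #(𝒫 Iio κ.ord) := by
        rw [mk_powerset, mk_Iio_ordinal, card_ord]
    _ ≤ #(⋃ p, S p) := mk_le_mk_of_subset hcover
    _ ≤ #(W × Iio κ.ord) * ⨆ p, #(S p) := mk_iUnion_le _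
    _ ≤ #W * Cardinal.lift.{1} κ * n := by
        rw [mk_prod, lift_id, lift_id, mk_Iio_ordinal, card_ord]
        exact mul_le_mul_right (ciSup_le' hS) _

end Guessing

theorem exists_family_lift_two_power_le {κ : Cardinal.{0}} (hκ : κ.IsInaccessible)
    {b : Ordinal.{0} → Ordinal.{0}} (hb : ∀ α < κ.ord, 0 < b α)
    (hfin : Cofinally κ.ord fun α => b α < Ordinal.omega0) :
    ∃ F : Set Ordinal.{0} → Ordinal.{0} → Ordinal.{0}, (∀ x, F x ∈ prodSet κ.ord b) ∧
      ∀ W ⊆ prodSet κ.ord b, (∀ x ⊆ Iio κ.ord, ∃ g ∈ W, neStar κ.ord (F x) g) →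
        Cardinal.lift.{1} (2 ^ κ) ≤ #W := by
  obtain ⟨n, hn⟩ := exists_nat_cofinally_eq (by rw [hκ.isRegular.cof_ord]; exact hκ.aleph0_lt) hfin
  obtain ⟨e⟩ := (Cardinal.le_def _ _).1
    ((mk_guess_le hκ.isStrongLimit n).trans (lift_le_mk_of_cofinally hκ.isRegular hn))
  let ι : Guess κ.ord n → Ordinal.{0} := fun r => (e r).1.1
  have hι : Function.Injective ι :=
    Subtype.val_injective.comp (Subtype.val_injective.comp e.injective)
  have hικ : ∀ r, ι r < κ.ord := fun r => (e r).1.2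
  have hιb : ∀ r, b (ι r) = n := fun r => (e r).2
  exact ⟨code ι, code_mem_prodSet hι hικ hιb hb, fun W hW hcov =>
    lift_two_power_le_of_forall_neStar hκ.aleph0_lt.le hι hικ hιb hW hcov⟩

def pointSlalom (o : Ordinal.{0}) (f : Ordinal.{0} → Ordinal.{0}) : Ordinal.{0} → Set Ordinal.{0} :=
  fun α => if α < o then {f α} else ∅

lemma pointSlalom_mem_slalomSet {o : Ordinal.{0}} {b h f : Ordinal.{0} → Ordinal.{0}}
    (hf : f ∈ prodSet o b) (hh : ∀ α < o, 2 ≤ h α) : pointSlalom o f ∈ slalomSet o b h := by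
  intro α
  refine ⟨fun hα => ?_, fun hα => if_neg hα⟩
  simp only [pointSlalom, if_pos hα, singleton_subset_iff, mem_Iio, mk_singleton]
  refine ⟨(hf α).1 hα, ?_⟩
  have h2 : (2 : Cardinal) ≤ (h α).card := by simpa using Ordinal.card_le_card (hh α hα)
  exact one_lt_lift_iff.2 (Cardinal.one_lt_two.trans_le h2)

lemma neStar_of_notInStar_pointSlalom {o : Ordinal.{0}} {f g : Ordinal.{0} → Ordinal.{0}}
    (h : notInStar o (pointSlalom o f) g) : neStar o f g := by
  obtain ⟨β, hβ, hg⟩ := h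
  refine ⟨β, hβ, fun α hβα hα => ?_⟩
  simpa [pointSlalom, if_pos hα, eq_comm] using hg α hβα hα

/-- If `{α < κ : b α < ℵ₀}` is cofinal in `κ`, then `d_κ^b(≠^∞) = 2^κ` and
`d_κ^{b,h}(∌^∞) = 2^κ` for every `h` with `2 ≤ h α ≤ b α`. -/
theorem stmt10 (κ : Cardinal.{0}) (hκ : κ.IsInaccessible)
    (b : Ordinal.{0} → Ordinal.{0})
    (hb : ∀ α < κ.ord, 2 ≤ b α ∧ b α < κ.ord)
    (hfin : Cofinally κ.ord (fun α => b α < Ordinal.omega0)) :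
    dNeq κ.ord b = Cardinal.lift.{1} (2 ^ κ) ∧
    ∀ h : Ordinal.{0} → Ordinal.{0}, (∀ α < κ.ord, 2 ≤ h α ∧ h α ≤ b α) →
      dAntiLoc κ.ord b h = Cardinal.lift.{1} (2 ^ κ) := by
  have hκ0 : 0 < κ.ord := ord_pos.2 hκ.pos
  have hcard := mk_prodSet_le hκ.aleph0_lt.le fun α hα => (hb α hα).2
  obtain ⟨F, hF, hFW⟩ := exists_family_lift_two_power_le hκ
    (fun α hα => two_pos.trans_le (hb α hα).1) hfin
  constructor
  · exact normOf_eq_of_forall_le (fun f _ => exists_neStar hκ0 (fun α hα => (hb α hα).1) f) hcard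
      fun W hW hcov => hFW W hW fun x _ => hcov _ (hF x)
  · intro h hh
    refine normOf_eq_of_forall_le
      (fun φ hφ => exists_notInStar hκ0 (fun α hα => (hh α hα).2) hφ) hcard
      fun W hW hcov => hFW W hW fun x _ => ?_
    obtain ⟨g, hgW, hg⟩ := hcov _ (pointSlalom_mem_slalomSet (hF x) fun α hα => (hh α hα).1)
    exact ⟨g, hgW, neStar_of_notInStar_pointSlalom hg⟩

end BGBS
end
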